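/- arXiv:1012.1497 — 8 statements merged into one kernel-verified Lean document; each statement's English description precedes it below -/
import Mathlib

section
/- Assume κ⁰ > 0, κ¹ > 0 and that the pair is nondegenerate. Then for all indices i ≠ i_* and j ≠ j_*, the function σ_{i,j} admits a zero in (0,∞) if and only if either (j < j_* and i > i_*), in which case σ_{i,j} is strictly increasing on (0,∞), or (j > j_* and i < i_*), in which case σ_{i,j} is strictly decreasing on (0,∞). -/
/-!
Writing `cᵢ = κⁱ / (m - 1)`, the Jacobi eigenvalue is `σ_{i,j}(λ) = (ρ⁰_i - c₀) + (ρ¹_j - c₁) / λ`,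
a function `A + B / λ` with constant coefficients. For `B ≠ 0` it is strictly monotone on `(0, ∞)`,
increasing if `B < 0` and decreasing if `B > 0`, and it vanishes somewhere on `(0, ∞)` exactly
when `A` and `B` have opposite signs. By the choice of `i_*` and `j_*` and strict monotonicity of
the eigenvalue sequences, the signs of `A` and `B` are those of `i - i_*` and `j - j_*`.
-/

open Set

section OrderedField

variable {K : Type*} [Field K] [LinearOrder K] [IsStrictOrderedRing K]

theorem exists_pos_add_div_eq_zero_iff {A B : K} (hB : B ≠ 0) :
    (∃ l : K, 0 < l ∧ A + B / l = 0) ↔ A * B < 0 := by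
  constructor
  · rintro ⟨l, hl, hzero⟩
    have hA : A = -(B / l) := eq_neg_of_add_eq_zero_left hzero
    have : 0 < B * B / l := div_pos (mul_self_pos.2 hB) hl
    calc A * B = -(B * B / l) := by rw [hA]; ring
      _ < 0 := neg_neg_of_pos this
  · intro hAB
    have hA : A ≠ 0 := by rintro rfl; simp at hAB
    -- the zero is `λ = -B / A = -(A B) / A²`
    have hl : 0 < -B / A := by
      have : -B / A = -(A * B) / (A * A) := by field_simp
      rw [this]
      exact div_pos (neg_pos.2 hAB) (mul_self_pos.2 hA)
    refine ⟨-B / A, hl, ?_⟩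
    field_simp
    ring

theorem strictMonoOn_add_div_of_neg (A : K) {B : K} (hB : B < 0) :
    StrictMonoOn (fun l : K => A + B / l) (Ioi 0) := by
  intro a ha b hb hab
  have : -B / b < -B / a := (div_lt_div_iff_of_pos_left (neg_pos.2 hB) hb ha).2 hab
  rw [neg_div, neg_div, neg_lt_neg_iff] at this
  simpa using this

theorem strictAntiOn_add_div_of_pos (A : K) {B : K} (hB : 0 < B) :
    StrictAntiOn (fun l : K => A + B / l) (Ioi 0) := by
  intro a ha b hb hab
  have : B / b < B / a := (div_lt_div_iff_of_pos_left hB hb ha).2 hab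
  simpa using this

/-- The paper's `i_*` (or `j_*`) is the threshold index of `ρ⁰` for `c = κ⁰ / (m - 1)`. -/
def IsThresholdIndex (ρ : ℕ → K) (c : K) (n : ℕ) : Prop :=
  1 ≤ n ∧ c ≤ ρ n ∧ ∀ i, 1 ≤ i → i < n → ρ i < c

variable {ρ : ℕ → K} {c : K} {n k : ℕ}

theorem IsThresholdIndex.sub_neg_iff (h : IsThresholdIndex ρ c n)
    (hmono : ∀ i j : ℕ, 1 ≤ i → i < j → ρ i < ρ j) (hk : 1 ≤ k) (hkn : k ≠ n) :
    ρ k - c < 0 ↔ k < n := by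
  obtain ⟨hn, hcn, hbelow⟩ := h
  rcases hkn.lt_or_gt with hlt | hgt
  · exact iff_of_true (by linarith [hbelow k hk hlt]) hlt
  · exact iff_of_false (by linarith [hmono n k hn hgt]) (by omega)

theorem IsThresholdIndex.sub_pos_iff (h : IsThresholdIndex ρ c n)
    (hmono : ∀ i j : ℕ, 1 ≤ i → i < j → ρ i < ρ j) (hk : 1 ≤ k) (hkn : k ≠ n) :
    0 < ρ k - c ↔ n < k := by
  obtain ⟨hn, hcn, hbelow⟩ := h
  rcases hkn.lt_or_gt with hlt | hgt
  · exact iff_of_false (by linarith [hbelow k hk hlt]) (by omega)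
  · exact iff_of_true (by linarith [hmono n k hn hgt]) hgt

end OrderedField

theorem stmt_2_general
    (m : ℕ)
    (κ₀ κ₁ : ℝ)
    (ρ₀ ρ₁ : ℕ → ℝ)
    (hρ₀mono : ∀ i j : ℕ, 1 ≤ i → i < j → ρ₀ i < ρ₀ j)
    (hρ₁mono : ∀ i j : ℕ, 1 ≤ i → i < j → ρ₁ i < ρ₁ j)
    (σ : ℕ → ℕ → ℝ → ℝ)
    (hσ : ∀ (i j : ℕ) (l : ℝ), 0 < l →
      σ i j l = ρ₀ i + ρ₁ j / l - (κ₀ + κ₁ / l) / ((m : ℝ) - 1))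
    (istar jstar : ℕ)
    (histar1 : 1 ≤ istar) (histar2 : κ₀ / ((m : ℝ) - 1) ≤ ρ₀ istar)
    (histar3 : ∀ i : ℕ, 1 ≤ i → i < istar → ρ₀ i < κ₀ / ((m : ℝ) - 1))
    (hjstar1 : 1 ≤ jstar) (hjstar2 : κ₁ / ((m : ℝ) - 1) ≤ ρ₁ jstar)
    (hjstar3 : ∀ j : ℕ, 1 ≤ j → j < jstar → ρ₁ j < κ₁ / ((m : ℝ) - 1)) :
    ∀ i j : ℕ, 1 ≤ i → 1 ≤ j → i ≠ istar → j ≠ jstar →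
      ((∃ l : ℝ, 0 < l ∧ σ i j l = 0) ↔
        ((j < jstar ∧ istar < i) ∨ (jstar < j ∧ i < istar))) ∧
      (j < jstar ∧ istar < i → StrictMonoOn (σ i j) (Set.Ioi (0 : ℝ))) ∧
      (jstar < j ∧ i < istar → StrictAntiOn (σ i j) (Set.Ioi (0 : ℝ))) := by
  intro i j hi hj hii hjj
  set A := ρ₀ i - κ₀ / ((m : ℝ) - 1)
  set B := ρ₁ j - κ₁ / ((m : ℝ) - 1)
  have hσAB : EqOn (fun l => A + B / l) (σ i j) (Ioi 0) := fun l hl => by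
    simp only [hσ i j l hl, A, B]
    ring
  have hI : IsThresholdIndex ρ₀ _ istar := ⟨histar1, histar2, histar3⟩
  have hJ : IsThresholdIndex ρ₁ _ jstar := ⟨hjstar1, hjstar2, hjstar3⟩
  have hA_neg := hI.sub_neg_iff hρ₀mono hi hii
  have hA_pos := hI.sub_pos_iff hρ₀mono hi hii
  have hB_neg := hJ.sub_neg_iff hρ₁mono hj hjj
  have hB_pos := hJ.sub_pos_iff hρ₁mono hj hjj
  have hB : B ≠ 0 := by
    rcases hjj.lt_or_gt with h | h
    exacts [(hB_neg.2 h).ne, (hB_pos.2 h).ne']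
  refine ⟨?_, fun h => ?_, fun h => ?_⟩
  · calc (∃ l : ℝ, 0 < l ∧ σ i j l = 0) ↔ ∃ l : ℝ, 0 < l ∧ A + B / l = 0 :=
          exists_congr fun l => and_congr_right fun hl => by rw [← hσAB hl]
      _ ↔ A * B < 0 := exists_pos_add_div_eq_zero_iff hB
      _ ↔ _ := by rw [mul_neg_iff, hA_pos, hA_neg, hB_pos, hB_neg]; tauto
  · exact (strictMonoOn_add_div_of_neg A (hB_neg.2 h.1)).congr hσAB
  · exact (strictAntiOn_add_div_of_pos A (hB_pos.2 h.1)).congr hσAB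

theorem stmt_2
    (m : ℕ) (hm : 3 ≤ m)
    (κ₀ κ₁ : ℝ)
    (ρ₀ ρ₁ : ℕ → ℝ)
    (hρ₀one : ρ₀ 1 = 0) (hρ₁one : ρ₁ 1 = 0)
    (hρ₀mono : ∀ i j : ℕ, 1 ≤ i → i < j → ρ₀ i < ρ₀ j)
    (hρ₁mono : ∀ i j : ℕ, 1 ≤ i → i < j → ρ₁ i < ρ₁ j)
    (hρ₀unb : ∀ C : ℝ, ∃ i : ℕ, 1 ≤ i ∧ C < ρ₀ i)
    (hρ₁unb : ∀ C : ℝ, ∃ j : ℕ, 1 ≤ j ∧ C < ρ₁ j)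
    (σ : ℕ → ℕ → ℝ → ℝ)
    (hσ : ∀ (i j : ℕ) (l : ℝ), 0 < l →
      σ i j l = ρ₀ i + ρ₁ j / l - (κ₀ + κ₁ / l) / ((m : ℝ) - 1))
    (hκ₀ : 0 < κ₀) (hκ₁ : 0 < κ₁)
    (istar jstar : ℕ)
    (histar1 : 1 ≤ istar) (histar2 : κ₀ / ((m : ℝ) - 1) ≤ ρ₀ istar)
    (histar3 : ∀ i : ℕ, 1 ≤ i → i < istar → ρ₀ i < κ₀ / ((m : ℝ) - 1))
    (hjstar1 : 1 ≤ jstar) (hjstar2 : κ₁ / ((m : ℝ) - 1) ≤ ρ₁ jstar)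
    (hjstar3 : ∀ j : ℕ, 1 ≤ j → j < jstar → ρ₁ j < κ₁ / ((m : ℝ) - 1))
    (hnondeg : ¬ (ρ₀ istar = κ₀ / ((m : ℝ) - 1) ∧ ρ₁ jstar = κ₁ / ((m : ℝ) - 1))) :
    ∀ i j : ℕ, 1 ≤ i → 1 ≤ j → i ≠ istar → j ≠ jstar →
      ((∃ l : ℝ, 0 < l ∧ σ i j l = 0) ↔
        ((j < jstar ∧ istar < i) ∨ (jstar < j ∧ i < istar))) ∧
      (j < jstar ∧ istar < i → StrictMonoOn (σ i j) (Set.Ioi (0 : ℝ))) ∧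
      (jstar < j ∧ i < istar → StrictAntiOn (σ i j) (Set.Ioi (0 : ℝ))) :=
  stmt_2_general m κ₀ κ₁ ρ₀ ρ₁ hρ₀mono hρ₁mono σ hσ istar jstar histar1 histar2 histar3 hjstar1
    hjstar2 hjstar3
end

section
/- Assume κ⁰ > 0, κ¹ > 0 and that the pair is nondegenerate. If ρ⁰_{i_*} = κ⁰/(m−1), then σ_{i_*,j} has no zeros in (0,∞) for any index j. If ρ⁰_{i_*} > κ⁰/(m−1), then σ_{i_*,j} has a zero in (0,∞) if and only if j < j_*. -/
theorem stmt_3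
    (m : ℕ) (hm : 3 ≤ m)
    (κ₀ κ₁ : ℝ)
    (ρ₀ ρ₁ : ℕ → ℝ)
    (hρ₀one : ρ₀ 1 = 0) (hρ₁one : ρ₁ 1 = 0)
    (hρ₀mono : ∀ i j : ℕ, 1 ≤ i → i < j → ρ₀ i < ρ₀ j)
    (hρ₁mono : ∀ i j : ℕ, 1 ≤ i → i < j → ρ₁ i < ρ₁ j)
    (hρ₀unb : ∀ C : ℝ, ∃ i : ℕ, 1 ≤ i ∧ C < ρ₀ i)
    (hρ₁unb : ∀ C : ℝ, ∃ j : ℕ, 1 ≤ j ∧ C < ρ₁ j)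
    (σ : ℕ → ℕ → ℝ → ℝ)
    (hσ : ∀ (i j : ℕ) (l : ℝ), 0 < l →
      σ i j l = ρ₀ i + ρ₁ j / l - (κ₀ + κ₁ / l) / ((m : ℝ) - 1))
    (hκ₀ : 0 < κ₀) (hκ₁ : 0 < κ₁)
    (istar jstar : ℕ)
    (histar1 : 1 ≤ istar) (histar2 : κ₀ / ((m : ℝ) - 1) ≤ ρ₀ istar)
    (histar3 : ∀ i : ℕ, 1 ≤ i → i < istar → ρ₀ i < κ₀ / ((m : ℝ) - 1))
    (hjstar1 : 1 ≤ jstar) (hjstar2 : κ₁ / ((m : ℝ) - 1) ≤ ρ₁ jstar)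
    (hjstar3 : ∀ j : ℕ, 1 ≤ j → j < jstar → ρ₁ j < κ₁ / ((m : ℝ) - 1))
    (hnondeg : ¬ (ρ₀ istar = κ₀ / ((m : ℝ) - 1) ∧ ρ₁ jstar = κ₁ / ((m : ℝ) - 1))) :
    (ρ₀ istar = κ₀ / ((m : ℝ) - 1) →
      ∀ j : ℕ, 1 ≤ j → ∀ l : ℝ, 0 < l → σ istar j l ≠ 0) ∧
    (κ₀ / ((m : ℝ) - 1) < ρ₀ istar →
      ∀ j : ℕ, 1 ≤ j → ((∃ l : ℝ, 0 < l ∧ σ istar j l = 0) ↔ j < jstar)) := by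
  have hM : (0:ℝ) < (m : ℝ) - 1 := by
    have : (3:ℝ) ≤ (m : ℝ) := by exact_mod_cast hm
    linarith
  have key : ∀ (j : ℕ) (l : ℝ), 0 < l → σ istar j l =
      (ρ₀ istar - κ₀ / ((m : ℝ) - 1)) + (ρ₁ j - κ₁ / ((m : ℝ) - 1)) / l := by
    intro j l hl
    rw [hσ istar j l hl]
    field_simp
    ring
  constructor
  · intro heq j hj l hl
    rw [key j l hl, heq]
    have hb : ρ₁ j - κ₁ / ((m : ℝ) - 1) ≠ 0 := by
      rcases lt_trichotomy j jstar with h | h | h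
      · have := hjstar3 j hj h
        intro h0; linarith
      · subst h
        intro h0
        exact hnondeg ⟨heq, by linarith⟩
      · have := hρ₁mono jstar j hjstar1 h
        intro h0; linarith
    intro h0
    apply hb
    have h1 : (ρ₁ j - κ₁ / ((m : ℝ) - 1)) / l = 0 := by linarith
    rcases div_eq_zero_iff.mp h1 with h2 | h2
    · exact h2
    · exact absurd h2 hl.ne'
  · intro ha j hj
    constructor
    · rintro ⟨l, hl, h0⟩
      rw [key j l hl] at h0
      by_contra hge
      push_neg at hge
      have hb : κ₁ / ((m : ℝ) - 1) ≤ ρ₁ j := by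
        rcases eq_or_lt_of_le hge with h | h
        · rw [← h]; exact hjstar2
        · exact le_of_lt (lt_of_le_of_lt hjstar2 (hρ₁mono jstar j hjstar1 h))
      have : 0 ≤ (ρ₁ j - κ₁ / ((m : ℝ) - 1)) / l :=
        div_nonneg (by linarith) hl.le
      linarith
    · intro hjlt
      have hb : ρ₁ j < κ₁ / ((m : ℝ) - 1) := hjstar3 j hj hjlt
      refine ⟨(κ₁ / ((m : ℝ) - 1) - ρ₁ j) / (ρ₀ istar - κ₀ / ((m : ℝ) - 1)), ?_, ?_⟩
      · exact div_pos (by linarith) (by linarith)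
      · rw [key _ _ (div_pos (by linarith) (by linarith))]
        have h2 : κ₁ / ((m : ℝ) - 1) - ρ₁ j ≠ 0 := by linarith
        have hq : (ρ₁ j - κ₁ / ((m : ℝ) - 1)) /
            ((κ₁ / ((m : ℝ) - 1) - ρ₁ j) / (ρ₀ istar - κ₀ / ((m : ℝ) - 1))) =
            -(ρ₀ istar - κ₀ / ((m : ℝ) - 1)) := by
          rw [div_div_eq_mul_div, div_eq_iff h2]
          ring
        rw [hq]
        ring
end

section
/- Assume κ⁰ > 0, κ¹ > 0 and that the pair is nondegenerate. If ρ¹_{j_*} = κ¹/(m−1), then σ_{i,j_*} has no zeros in (0,∞) for any index i. If ρ¹_{j_*} > κ¹/(m−1), then σ_{i,j_*} has a zero in (0,∞) if and only if i < i_*. -/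
/-! Along the column `j_*`, `σ_{i,j_*}(λ) = a_i + d/λ` with `a_i = ρ⁰_i - κ⁰/(m-1)` and
`d = ρ¹_{j_*} - κ¹/(m-1)`. If `d = 0`, nondegeneracy makes `ρ⁰_{i_*}` strictly exceed
`κ⁰/(m-1)`, so no `a_i` vanishes. If `d > 0`, `a + d/λ` has a positive zero exactly when `a < 0`,
and by monotonicity `a_i < 0` exactly for `i < i_*`. -/

lemma add_div_sub_add_div_div (a b x y l c : ℝ) :
    a + b / l - (x + y / l) / c = (a - x / c) + (b - y / c) / l := by
  ring

lemma exists_pos_add_div_eq_zero_iff_s4 {a d : ℝ} (hd : 0 < d) :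
    (∃ l : ℝ, 0 < l ∧ a + d / l = 0) ↔ a < 0 := by
  constructor
  · rintro ⟨l, hl, hzero⟩
    linarith [div_pos hd hl]
  · intro ha
    have hna : 0 < -a := neg_pos.2 ha
    refine ⟨d / -a, div_pos hd hna, ?_⟩
    rw [div_div_cancel₀ hd.ne', add_neg_cancel]

section Threshold

variable {ρ : ℕ → ℝ} {c : ℝ} {n i : ℕ}

lemma apply_le_apply_of_le (hmono : ∀ i j : ℕ, 1 ≤ i → i < j → ρ i < ρ j) (hn : 1 ≤ n)
    (hi : n ≤ i) : ρ n ≤ ρ i := by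
  rcases hi.eq_or_lt with rfl | hlt
  · exact le_rfl
  · exact (hmono n i hn hlt).le

lemma lt_threshold_iff (hmono : ∀ i j : ℕ, 1 ≤ i → i < j → ρ i < ρ j) (hn : 1 ≤ n)
    (hbelow : ∀ i : ℕ, 1 ≤ i → i < n → ρ i < c) (hc : c ≤ ρ n) (hi : 1 ≤ i) :
    ρ i < c ↔ i < n := by
  refine ⟨fun hρi => ?_, hbelow i hi⟩
  by_contra! hni
  exact (hc.trans (apply_le_apply_of_le hmono hn hni)).not_gt hρi

lemma ne_of_lt_threshold (hmono : ∀ i j : ℕ, 1 ≤ i → i < j → ρ i < ρ j) (hn : 1 ≤ n)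
    (hbelow : ∀ i : ℕ, 1 ≤ i → i < n → ρ i < c) (hc : c < ρ n) (hi : 1 ≤ i) :
    ρ i ≠ c := by
  rcases lt_or_ge i n with hin | hni
  · exact (hbelow i hi hin).ne
  · exact (hc.trans_le (apply_le_apply_of_le hmono hn hni)).ne'

end Threshold

theorem stmt_4_general
    (m : ℕ)
    (κ₀ κ₁ : ℝ)
    (ρ₀ ρ₁ : ℕ → ℝ)
    (hρ₀mono : ∀ i j : ℕ, 1 ≤ i → i < j → ρ₀ i < ρ₀ j)
    (σ : ℕ → ℕ → ℝ → ℝ)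
    (hσ : ∀ (i j : ℕ) (l : ℝ), 0 < l →
      σ i j l = ρ₀ i + ρ₁ j / l - (κ₀ + κ₁ / l) / ((m : ℝ) - 1))
    (istar jstar : ℕ)
    (histar1 : 1 ≤ istar) (histar2 : κ₀ / ((m : ℝ) - 1) ≤ ρ₀ istar)
    (histar3 : ∀ i : ℕ, 1 ≤ i → i < istar → ρ₀ i < κ₀ / ((m : ℝ) - 1))
    (hnondeg : ¬ (ρ₀ istar = κ₀ / ((m : ℝ) - 1) ∧ ρ₁ jstar = κ₁ / ((m : ℝ) - 1))) :
    (ρ₁ jstar = κ₁ / ((m : ℝ) - 1) →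
      ∀ i : ℕ, 1 ≤ i → ∀ l : ℝ, 0 < l → σ i jstar l ≠ 0) ∧
    (κ₁ / ((m : ℝ) - 1) < ρ₁ jstar →
      ∀ i : ℕ, 1 ≤ i → ((∃ l : ℝ, 0 < l ∧ σ i jstar l = 0) ↔ i < istar)) := by
  have hσjstar : ∀ (i : ℕ) (l : ℝ), 0 < l → σ i jstar l =
      (ρ₀ i - κ₀ / ((m : ℝ) - 1)) + (ρ₁ jstar - κ₁ / ((m : ℝ) - 1)) / l := fun i l hl =>
    (hσ i jstar l hl).trans (add_div_sub_add_div_div _ _ _ _ _ _)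
  refine ⟨fun heq i hi l hl => ?_, fun hlt i hi => ?_⟩
  · have hstrict : κ₀ / ((m : ℝ) - 1) < ρ₀ istar :=
      histar2.lt_of_ne fun h => hnondeg ⟨h.symm, heq⟩
    rw [hσjstar i l hl, heq, sub_self, zero_div, add_zero, sub_ne_zero]
    exact ne_of_lt_threshold hρ₀mono histar1 histar3 hstrict hi
  · rw [← lt_threshold_iff hρ₀mono histar1 histar3 histar2 hi, ← sub_neg,
      ← exists_pos_add_div_eq_zero_iff_s4 (sub_pos.2 hlt)]
    exact exists_congr fun l => and_congr_right fun hl => by rw [hσjstar i l hl]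

theorem stmt_4
    (m : ℕ) (hm : 3 ≤ m)
    (κ₀ κ₁ : ℝ)
    (ρ₀ ρ₁ : ℕ → ℝ)
    (hρ₀one : ρ₀ 1 = 0) (hρ₁one : ρ₁ 1 = 0)
    (hρ₀mono : ∀ i j : ℕ, 1 ≤ i → i < j → ρ₀ i < ρ₀ j)
    (hρ₁mono : ∀ i j : ℕ, 1 ≤ i → i < j → ρ₁ i < ρ₁ j)
    (hρ₀unb : ∀ C : ℝ, ∃ i : ℕ, 1 ≤ i ∧ C < ρ₀ i)
    (hρ₁unb : ∀ C : ℝ, ∃ j : ℕ, 1 ≤ j ∧ C < ρ₁ j)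
    (σ : ℕ → ℕ → ℝ → ℝ)
    (hσ : ∀ (i j : ℕ) (l : ℝ), 0 < l →
      σ i j l = ρ₀ i + ρ₁ j / l - (κ₀ + κ₁ / l) / ((m : ℝ) - 1))
    (hκ₀ : 0 < κ₀) (hκ₁ : 0 < κ₁)
    (istar jstar : ℕ)
    (histar1 : 1 ≤ istar) (histar2 : κ₀ / ((m : ℝ) - 1) ≤ ρ₀ istar)
    (histar3 : ∀ i : ℕ, 1 ≤ i → i < istar → ρ₀ i < κ₀ / ((m : ℝ) - 1))
    (hjstar1 : 1 ≤ jstar) (hjstar2 : κ₁ / ((m : ℝ) - 1) ≤ ρ₁ jstar)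
    (hjstar3 : ∀ j : ℕ, 1 ≤ j → j < jstar → ρ₁ j < κ₁ / ((m : ℝ) - 1))
    (hnondeg : ¬ (ρ₀ istar = κ₀ / ((m : ℝ) - 1) ∧ ρ₁ jstar = κ₁ / ((m : ℝ) - 1))) :
    (ρ₁ jstar = κ₁ / ((m : ℝ) - 1) →
      ∀ i : ℕ, 1 ≤ i → ∀ l : ℝ, 0 < l → σ i jstar l ≠ 0) ∧
    (κ₁ / ((m : ℝ) - 1) < ρ₁ jstar →
      ∀ i : ℕ, 1 ≤ i → ((∃ l : ℝ, 0 < l ∧ σ i jstar l = 0) ↔ i < istar)) :=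
  stmt_4_general m κ₀ κ₁ ρ₀ ρ₁ hρ₀mono σ hσ istar jstar histar1 histar2 histar3 hnondeg
end

section
/- Assume κ⁰ > 0, κ¹ > 0 and that the pair is nondegenerate. Then the degeneracy set Λ = { λ ∈ (0,∞) : σ_{i,j}(λ) = 0 for some pair of indices (i,j) ≠ (1,1) } is countable and discrete (it has no accumulation points in (0,∞)); moreover Λ is the union of the range of a strictly increasing sequence tending to +∞ and the range of a strictly decreasing sequence tending to 0. -/
open Filter Set Topology
open scoped Pointwise

/-!
Put `a_i = ρ⁰_i - κ⁰/(m-1)` and `b_j = ρ¹_j - κ¹/(m-1)`. Then `λ σ_{i,j}(λ) = a_i λ + b_j`, so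
(nondegeneracy excluding `a_i = b_j = 0`) the degeneracy set consists of the quotients
`b_j / (-a_i)` with `a_i < 0 < b_j`, together with the quotients `(-b_j) / a_i` with `b_j < 0 < a_i`.
Only finitely many `a_i`, `b_j` are negative, while the positive ones have only finitely many
members below any bound. Hence the first family has finitely many members below any bound and
the second finitely many above any positive bound, and listing them in increasing, resp.
decreasing, order gives `u` and `v`.
-/

theorem exists_strictMono_tendsto_atTop_range_eq {S : Set ℝ} (hS : S.Infinite)
    (hfin : ∀ C, (S ∩ Iic C).Finite) :
    ∃ u : ℕ → ℝ, StrictMono u ∧ Tendsto u atTop atTop ∧ range u = S := by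
  have hIic : ∀ s : S, (Iic s).Finite := fun s =>
    ((hfin s).preimage Subtype.val_injective.injOn).subset fun t ht => ⟨t.2, ht⟩
  have hunb : ∀ C, ∃ s ∈ S, C < s := fun C => by
    obtain ⟨s, hs, hsC⟩ := (hS.sdiff (hfin C)).nonempty
    exact ⟨s, hs, not_le.1 fun h => hsC ⟨hs, h⟩⟩
  obtain ⟨s₀, hs₀⟩ := hS.nonempty
  obtain ⟨b, ⟨hbS, hbs₀⟩, hb⟩ :=
    (S ∩ Iic s₀).exists_min_image id (hfin s₀) ⟨s₀, hs₀, mem_Iic.2 le_rfl⟩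
  let _ : OrderBot S :=
    { bot := ⟨b, hbS⟩
      bot_le := fun s => (le_total (s : ℝ) s₀).elim (fun h => hb s ⟨s.2, h⟩)
        fun h => show b ≤ (s : ℝ) from le_trans hbs₀ h }
  let _ : LocallyFiniteOrder S :=
    LocallyFiniteOrder.ofFiniteIcc fun _ b => (hIic b).subset Icc_subset_Iic_self
  let _ := LinearLocallyFiniteOrder.succOrder S
  let _ := LinearLocallyFiniteOrder.predOrder S
  have : NoMaxOrder S := ⟨fun s => by
    obtain ⟨t, ht, hst⟩ := hunb s
    exact ⟨⟨t, ht⟩, hst⟩⟩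
  -- `S` has a least element, finite initial segments and no maximum, so it is a copy of `ℕ`
  let e : S ≃o ℕ := orderIsoNatOfLinearSuccPredArch
  have hmono : StrictMono fun n => (e.symm n : ℝ) := fun _ _ h => e.symm.strictMono h
  refine ⟨fun n => e.symm n, hmono, ?_, ?_⟩
  · refine tendsto_atTop_atTop_of_monotone hmono.monotone fun C => ?_
    obtain ⟨t, ht, hCt⟩ := hunb C
    exact ⟨e ⟨t, ht⟩, by simpa using hCt.le⟩
  · ext s
    refine ⟨?_, fun hs => ⟨e ⟨s, hs⟩, by simp⟩⟩
    rintro ⟨n, rfl⟩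
    exact (e.symm n).2

theorem finite_range_inter_of_tendsto {α : Type*} {u : ℕ → α} {l : Filter α}
    (hu : Tendsto u atTop l) {K : Set α} (hK : Kᶜ ∈ l) : (range u ∩ K).Finite := by
  rw [← Nat.cofinite_eq_atTop] at hu
  have : (u ⁻¹' K).Finite := by simpa using hu hK
  refine (this.image u).subset ?_
  rintro _ ⟨⟨n, rfl⟩, hn⟩
  exact mem_image_of_mem u hn

theorem exists_pos_le_abs_sub_of_finite_inter {S K : Set ℝ} {x : ℝ} (hK : K ∈ 𝓝 x)
    (hSK : (S ∩ K).Finite) : ∃ ε > 0, ∀ l ∈ S, l ≠ x → ε ≤ |l - x| := by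
  have hF : ((S ∩ K) \ {x})ᶜ ∈ 𝓝 x :=
    hSK.sdiff.isClosed.isOpen_compl.mem_nhds fun h => h.2 rfl
  obtain ⟨ε, hε, hball⟩ := Metric.mem_nhds_iff.1 (inter_mem hK hF)
  refine ⟨ε, hε, fun l hl hlx => not_lt.1 fun hlε => ?_⟩
  have hmem := hball (show l ∈ Metric.ball x ε by rwa [Metric.mem_ball, Real.dist_eq])
  exact hmem.2 ⟨⟨hl, hmem.1⟩, hlx⟩

theorem exists_pos_le_abs_sub_of_tendsto {u v : ℕ → ℝ} (hu : Tendsto u atTop atTop)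
    (hv : Tendsto v atTop (𝓝 0)) {x : ℝ} (hx : 0 < x) :
    ∃ ε > 0, ∀ l ∈ range u ∪ range v, l ≠ x → ε ≤ |l - x| := by
  refine exists_pos_le_abs_sub_of_finite_inter (K := Icc (x / 2) (2 * x))
    (Icc_mem_nhds (by linarith) (by linarith)) ?_
  rw [union_inter_distrib_right]
  refine (finite_range_inter_of_tendsto hu ?_).union (finite_range_inter_of_tendsto hv ?_)
  · exact mem_of_superset (Ioi_mem_atTop (2 * x)) fun y hy hyK => not_le.2 hy hyK.2
  · exact mem_of_superset (Iio_mem_nhds (half_pos hx)) fun y hy hyK => not_le.2 hy hyK.1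

theorem finite_div_inter_Iic {P Q : Set ℝ} (hP : ∀ D, (P ∩ Iic D).Finite) (hQ : Q.Finite)
    (hQpos : Q ⊆ Ioi 0) (C : ℝ) : (P / Q ∩ Iic C).Finite := by
  obtain ⟨c, hc⟩ := hQ.bddAbove
  refine ((hP (|C| * c)).div hQ).subset ?_
  rintro _ ⟨⟨p, hp, q, hq, rfl⟩, hpq⟩
  refine div_mem_div ⟨hp, ?_⟩ hq
  have hq0 : 0 < q := hQpos hq
  calc p = p / q * q := (div_mul_cancel₀ p hq0.ne').symm
    _ ≤ |C| * c := mul_le_mul (le_trans hpq (le_abs_self C)) (hc hq) hq0.le (abs_nonneg C)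

theorem exists_strictMono_range_eq_pos_div_neg {V W : Set ℝ} (hV : V.Infinite)
    (hVfin : ∀ D, (V ∩ Iic D).Finite) (hWfin : (W ∩ Iic 0).Finite) (hW : ∃ w ∈ W, w < 0) :
    ∃ u : ℕ → ℝ, StrictMono u ∧ Tendsto u atTop atTop ∧
      range u = (V ∩ Ioi 0) / (-W ∩ Ioi 0) := by
  obtain ⟨w, hw, hw0⟩ := hW
  have hP : (V ∩ Ioi 0).Infinite :=
    (hV.sdiff (hVfin 0)).mono fun x hx => ⟨hx.1, not_le.1 fun h => hx.2 ⟨hx.1, mem_Iic.2 h⟩⟩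
  have hQ : (-W ∩ Ioi 0).Finite :=
    hWfin.neg.subset fun x hx => ⟨hx.1, mem_Iic.2 (neg_nonpos.2 (le_of_lt hx.2))⟩
  refine exists_strictMono_tendsto_atTop_range_eq ?_
    (finite_div_inter_Iic (fun D => (hVfin D).subset ?_) hQ inter_subset_right)
  · rw [← image2_div]
    refine hP.image2_left (b := -w) ⟨by rwa [Set.mem_neg, neg_neg], neg_pos.2 hw0⟩ ?_
    exact fun _ _ _ _ h => (div_left_inj' (neg_ne_zero.2 hw0.ne)).1 h
  · exact inter_subset_inter_left _ inter_subset_left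

theorem exists_strictAnti_range_eq_neg_div_pos {V W : Set ℝ} (hV : V.Infinite)
    (hVfin : ∀ D, (V ∩ Iic D).Finite) (hWfin : (W ∩ Iic 0).Finite) (hW : ∃ w ∈ W, w < 0) :
    ∃ v : ℕ → ℝ, StrictAnti v ∧ Tendsto v atTop (𝓝 0) ∧
      range v = (-W ∩ Ioi 0) / (V ∩ Ioi 0) := by
  obtain ⟨u, hu, hu_top, hu_range⟩ := exists_strictMono_range_eq_pos_div_neg hV hVfin hWfin hW
  have hu_pos : ∀ n, 0 < u n := fun n => by
    obtain ⟨p, hp, q, hq, hpq⟩ := Set.mem_div.1 (hu_range ▸ mem_range_self n)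
    exact hpq ▸ div_pos hp.2 hq.2
  refine ⟨fun n => (u n)⁻¹, fun m n h => inv_strictAnti₀ (hu_pos m) (hu h),
    tendsto_inv_atTop_zero.comp hu_top, ?_⟩
  rw [← inv_range, hu_range, inv_div]

theorem setOf_pos_mul_add_eq_zero {A B : Set ℝ} (h : ¬(0 ∈ A ∧ 0 ∈ B)) :
    {l : ℝ | 0 < l ∧ ∃ α ∈ A, ∃ β ∈ B, α * l + β = 0} =
      (B ∩ Ioi 0) / (-A ∩ Ioi 0) ∪ (-B ∩ Ioi 0) / (A ∩ Ioi 0) := by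
  ext l
  simp only [mem_ofPred_eq, mem_union, Set.mem_div, mem_inter_iff, Set.mem_neg, mem_Ioi]
  constructor
  · rintro ⟨hl, α, hα, β, hβ, hαβ⟩
    rcases lt_trichotomy α 0 with hα0 | rfl | hα0
    · refine Or.inl ⟨β, ⟨hβ, by nlinarith⟩, -α, ⟨by rwa [neg_neg], by linarith⟩, ?_⟩
      exact (div_eq_iff (neg_ne_zero.2 hα0.ne)).2 (by linarith)
    · rw [zero_mul, zero_add] at hαβ
      exact absurd ⟨hα, hαβ ▸ hβ⟩ h
    · refine Or.inr ⟨-β, ⟨by rwa [neg_neg], by nlinarith⟩, α, ⟨hα, hα0⟩, ?_⟩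
      exact (div_eq_iff hα0.ne').2 (by linarith)
  · rintro (⟨β, ⟨hβ, hβ0⟩, γ, ⟨hγ, hγ0⟩, rfl⟩ | ⟨β, ⟨hβ, hβ0⟩, γ, ⟨hγ, hγ0⟩, rfl⟩)
    · exact ⟨div_pos hβ0 hγ0, -γ, hγ, β, hβ, by field_simp; ring⟩
    · exact ⟨div_pos hβ0 hγ0, γ, hγ, -β, hβ, by field_simp; ring⟩

def shiftedSpectrum (ρ : ℕ → ℝ) (c : ℝ) : Set ℝ := (fun i => ρ i - c) '' Ici 1

section shiftedSpectrum

variable {ρ : ℕ → ℝ} (c : ℝ)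

theorem finite_shiftedSpectrum_inter_Iic (hmono : MonotoneOn ρ (Ici 1))
    (hunb : ∀ C, ∃ i, 1 ≤ i ∧ C < ρ i) (D : ℝ) : (shiftedSpectrum ρ c ∩ Iic D).Finite := by
  obtain ⟨k, hk, hDk⟩ := hunb (D + c)
  refine ((finite_Iio k).image fun i => ρ i - c).subset ?_
  rintro _ ⟨⟨i, hi, rfl⟩, hiD⟩
  refine mem_image_of_mem _ (mem_Iio.2 (not_le.1 fun hki => ?_))
  have := hmono hk hi hki
  rw [mem_Iic] at hiD
  linarith

theorem infinite_shiftedSpectrum (hmono : StrictMonoOn ρ (Ici 1)) :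
    (shiftedSpectrum ρ c).Infinite :=
  (Ici_infinite 1).image fun _ hi _ hj h => hmono.injOn hi hj (sub_left_inj.1 h)

theorem eq_of_zero_mem_shiftedSpectrum (hmono : StrictMonoOn ρ (Ici 1)) {k : ℕ} (hk : 1 ≤ k)
    (hck : c ≤ ρ k) (hlt : ∀ i, 1 ≤ i → i < k → ρ i < c) (h0 : 0 ∈ shiftedSpectrum ρ c) :
    ρ k = c := by
  obtain ⟨i, hi, hic⟩ := h0
  rw [sub_eq_zero] at hic
  rcases lt_trichotomy i k with h | rfl | h
  · exact absurd hic (hlt i hi h).ne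
  · exact hic
  · linarith [hmono hk hi h]

end shiftedSpectrum

theorem add_div_sub_div_eq_zero_iff {x y z w d l : ℝ} (hl : l ≠ 0) (hd : d ≠ 0) :
    x + y / l - (z + w / l) / d = 0 ↔ (x - z / d) * l + (y - w / d) = 0 := by
  have : x + y / l - (z + w / l) / d = ((x - z / d) * l + (y - w / d)) / l := by
    field_simp
    ring
  rw [this, div_eq_zero_iff, or_iff_left hl]

theorem setOf_pos_exists_eq_zero_eq_shiftedSpectrum {σ : ℕ → ℕ → ℝ → ℝ} {ρ₀ ρ₁ : ℕ → ℝ}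
    {c₀ c₁ : ℝ} (hσ : ∀ i j l, 0 < l → (σ i j l = 0 ↔ (ρ₀ i - c₀) * l + (ρ₁ j - c₁) = 0))
    (h₀ : ρ₀ 1 < c₀) (h₁ : ρ₁ 1 < c₁) :
    {l : ℝ | 0 < l ∧ ∃ i j : ℕ, 1 ≤ i ∧ 1 ≤ j ∧ (i, j) ≠ (1, 1) ∧ σ i j l = 0} =
      {l | 0 < l ∧ ∃ α ∈ shiftedSpectrum ρ₀ c₀, ∃ β ∈ shiftedSpectrum ρ₁ c₁, α * l + β = 0} := by
  ext l
  refine and_congr_right fun hl => ⟨?_, ?_⟩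
  · rintro ⟨i, j, hi, hj, -, hij⟩
    exact ⟨_, ⟨i, hi, rfl⟩, _, ⟨j, hj, rfl⟩, (hσ i j l hl).1 hij⟩
  · rintro ⟨_, ⟨i, hi, rfl⟩, _, ⟨j, hj, rfl⟩, hij⟩
    refine ⟨i, j, hi, hj, ?_, (hσ i j l hl).2 hij⟩
    rintro ⟨⟩
    nlinarith

theorem stmt_5
    (m : ℕ) (hm : 3 ≤ m)
    (κ₀ κ₁ : ℝ)
    (ρ₀ ρ₁ : ℕ → ℝ)
    (hρ₀one : ρ₀ 1 = 0) (hρ₁one : ρ₁ 1 = 0)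
    (hρ₀mono : ∀ i j : ℕ, 1 ≤ i → i < j → ρ₀ i < ρ₀ j)
    (hρ₁mono : ∀ i j : ℕ, 1 ≤ i → i < j → ρ₁ i < ρ₁ j)
    (hρ₀unb : ∀ C : ℝ, ∃ i : ℕ, 1 ≤ i ∧ C < ρ₀ i)
    (hρ₁unb : ∀ C : ℝ, ∃ j : ℕ, 1 ≤ j ∧ C < ρ₁ j)
    (σ : ℕ → ℕ → ℝ → ℝ)
    (hσ : ∀ (i j : ℕ) (l : ℝ), 0 < l →
      σ i j l = ρ₀ i + ρ₁ j / l - (κ₀ + κ₁ / l) / ((m : ℝ) - 1))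
    (hκ₀ : 0 < κ₀) (hκ₁ : 0 < κ₁)
    (istar jstar : ℕ)
    (histar1 : 1 ≤ istar) (histar2 : κ₀ / ((m : ℝ) - 1) ≤ ρ₀ istar)
    (histar3 : ∀ i : ℕ, 1 ≤ i → i < istar → ρ₀ i < κ₀ / ((m : ℝ) - 1))
    (hjstar1 : 1 ≤ jstar) (hjstar2 : κ₁ / ((m : ℝ) - 1) ≤ ρ₁ jstar)
    (hjstar3 : ∀ j : ℕ, 1 ≤ j → j < jstar → ρ₁ j < κ₁ / ((m : ℝ) - 1))
    (hnondeg : ¬ (ρ₀ istar = κ₀ / ((m : ℝ) - 1) ∧ ρ₁ jstar = κ₁ / ((m : ℝ) - 1)))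
    (Λ : Set ℝ)
    (hΛ : Λ = {l : ℝ | 0 < l ∧ ∃ i j : ℕ, 1 ≤ i ∧ 1 ≤ j ∧ (i, j) ≠ (1, 1) ∧ σ i j l = 0}) :
    Λ.Countable ∧
    (∀ x : ℝ, 0 < x → ∃ ε > (0 : ℝ), ∀ l ∈ Λ, l ≠ x → ε ≤ |l - x|) ∧
    (∃ u v : ℕ → ℝ, StrictMono u ∧ Filter.Tendsto u Filter.atTop Filter.atTop ∧
      StrictAnti v ∧ Filter.Tendsto v Filter.atTop (nhds 0) ∧
      Λ = Set.range u ∪ Set.range v) := by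
  have hm1 : (0 : ℝ) < m - 1 := by
    have : (3 : ℝ) ≤ m := by exact_mod_cast hm
    linarith
  set c₀ := κ₀ / ((m : ℝ) - 1)
  set c₁ := κ₁ / ((m : ℝ) - 1)
  have h₀ : ρ₀ 1 < c₀ := hρ₀one ▸ div_pos hκ₀ hm1
  have h₁ : ρ₁ 1 < c₁ := hρ₁one ▸ div_pos hκ₁ hm1
  have hmono₀ : StrictMonoOn ρ₀ (Ici 1) := fun i hi j _ hij => hρ₀mono i j hi hij
  have hmono₁ : StrictMonoOn ρ₁ (Ici 1) := fun i hi j _ hij => hρ₁mono i j hi hij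
  set A := shiftedSpectrum ρ₀ c₀
  set B := shiftedSpectrum ρ₁ c₁
  have hAB : ¬(0 ∈ A ∧ 0 ∈ B) := fun ⟨hA, hB⟩ => hnondeg
    ⟨eq_of_zero_mem_shiftedSpectrum c₀ hmono₀ histar1 histar2 histar3 hA,
      eq_of_zero_mem_shiftedSpectrum c₁ hmono₁ hjstar1 hjstar2 hjstar3 hB⟩
  have hA : ∃ α ∈ A, α < 0 := ⟨_, mem_image_of_mem _ self_mem_Ici, sub_neg.2 h₀⟩
  have hB : ∃ β ∈ B, β < 0 := ⟨_, mem_image_of_mem _ self_mem_Ici, sub_neg.2 h₁⟩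
  have hAfin := finite_shiftedSpectrum_inter_Iic c₀ hmono₀.monotoneOn hρ₀unb
  have hBfin := finite_shiftedSpectrum_inter_Iic c₁ hmono₁.monotoneOn hρ₁unb
  obtain ⟨u, hu, hu_top, hu_range⟩ :=
    exists_strictMono_range_eq_pos_div_neg (infinite_shiftedSpectrum c₁ hmono₁) hBfin (hAfin 0) hA
  obtain ⟨v, hv, hv_zero, hv_range⟩ :=
    exists_strictAnti_range_eq_neg_div_pos (infinite_shiftedSpectrum c₀ hmono₀) hAfin (hBfin 0) hB
  have hΛuv : Λ = range u ∪ range v := by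
    rw [hΛ, setOf_pos_exists_eq_zero_eq_shiftedSpectrum (fun i j l hl => by
      rw [hσ i j l hl, add_div_sub_div_eq_zero_iff hl.ne' hm1.ne']) h₀ h₁,
      setOf_pos_mul_add_eq_zero hAB, hu_range, hv_range]
  exact ⟨hΛuv ▸ (countable_range u).union (countable_range v),
    fun x hx => hΛuv ▸ exists_pos_le_abs_sub_of_tendsto hu_top hv_zero hx,
    u, v, hu, hu_top, hv, hv_zero, hΛuv⟩
end

section
/- Assume κ⁰ > 0, κ¹ > 0, that the pair is nondegenerate, and let positive integers μ⁰_i, μ¹_j (i,j ≥ 1) be given (the multiplicities of the eigenvalues ρ⁰_i, ρ¹_j). For λ > 0 define the Morse index n(λ) = Σ μ⁰_i μ¹_j, the sum being over all pairs (i,j) ≠ (1,1) with σ_{i,j}(λ) < 0. Then n(λ) is finite for every λ > 0, n is constant on each connected component of (0,∞) \ Λ, and for all but finitely many λ_* ∈ Λ the value of n on the component immediately to the left of λ_* differs from its value on the component immediately to the right of λ_*. -/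
/-!
Put `aᵢ = ρ⁰ᵢ - κ⁰/(m-1)` and `bⱼ = ρ¹ⱼ - κ¹/(m-1)`, so that `σᵢⱼ(λ) = aᵢ + bⱼ/λ` has the sign of
`aᵢλ + bⱼ`. Both sequences are nondecreasing and unbounded with `a₁, b₁ < 0`, so over a compact
subset of `(0, ∞)` only finitely many pairs can be negative or vanish. Nondegeneracy excludes
`aᵢ = bⱼ = 0`, so a pair vanishes only at `λ = -bⱼ/aᵢ` and `Λ` is discrete in `(0, ∞)`. Crossing a
point `λ_*` of `Λ` from left to right, a pair vanishing there enters the negative set if `aᵢ < 0`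
and leaves it if `aᵢ > 0`; all other pairs keep their sign. Hence the index jumps unless pairs of
both kinds vanish at `λ_*`, and such `λ_*` lie between `min {bⱼ > 0} / (-a₁)` and
`-b₁ / min {aᵢ > 0}`, so there are only finitely many of them.
-/

open Set Filter Topology

theorem Finset.sum_lt_sum_of_ssubset_of_pos {ι M : Type*} [AddCommMonoid M] [PartialOrder M]
    [IsOrderedCancelAddMonoid M] {s t : Finset ι} {f : ι → M} (hst : s ⊂ t)
    (hf : ∀ i ∈ t, 0 < f i) : ∑ i ∈ s, f i < ∑ i ∈ t, f i := by
  obtain ⟨i, hit, his⟩ := Finset.exists_of_ssubset hst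
  exact Finset.sum_lt_sum_of_subset hst.subset hit his (hf i hit) fun j hj _ => (hf j hj).le

theorem ContinuousOn.neg_iff_neg_of_forall_ne_zero {α δ : Type*}
    [ConditionallyCompleteLinearOrder α] [TopologicalSpace α] [OrderTopology α] [DenselyOrdered α]
    [LinearOrder δ] [TopologicalSpace δ] [OrderClosedTopology δ] [Zero δ] {f : α → δ} {x y : α}
    (hf : ContinuousOn f (uIcc x y)) (hne : ∀ z ∈ uIcc x y, f z ≠ 0) : f x < 0 ↔ f y < 0 := by
  have h₀ : (0 : δ) ∉ uIcc (f x) (f y) := fun h => by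
    obtain ⟨z, hz, hfz⟩ := intermediate_value_uIcc hf h
    exact hne z hz hfz
  rw [mem_uIcc] at h₀
  constructor <;> intro h <;> by_contra! h'
  exacts [h₀ (Or.inl ⟨h.le, h'⟩), h₀ (Or.inr ⟨h.le, h'⟩)]

theorem add_div_neg_iff_of_forall_ne_zero {α β x y : ℝ} (hx : 0 < x) (hy : 0 < y)
    (hne : ∀ z ∈ uIcc x y, α + β / z ≠ 0) : α + β / x < 0 ↔ α + β / y < 0 :=
  ContinuousOn.neg_iff_neg_of_forall_ne_zero (f := fun z => α + β / z)
    (continuousOn_const.add <| continuousOn_const.div continuousOn_id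
      fun _ hz => ((lt_min hx hy).trans_le hz.1).ne') hne

theorem add_div_neg_iff_of_add_div_eq_zero {α β l₀ l : ℝ} (hl₀ : 0 < l₀) (hl : 0 < l)
    (h₀ : α + β / l₀ = 0) : α + β / l < 0 ↔ α * (l - l₀) < 0 := by
  have hβ : β = -(α * l₀) := by
    field_simp at h₀
    linarith
  rw [hβ, show α + -(α * l₀) / l = α * (l - l₀) / l by field_simp; ring, div_lt_iff₀ hl, zero_mul]

theorem StrictMonoOn.eq_of_apply_eq_of_forall_lt {α : Type*} [Preorder α] {f : ℕ → α}
    (hf : StrictMonoOn f (Ici 1)) {k i : ℕ} {c : α} (hk : 1 ≤ k) (hck : c ≤ f k)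
    (hlt : ∀ i, 1 ≤ i → i < k → f i < c) (hi : 1 ≤ i) (hfi : f i = c) : i = k := by
  rcases lt_trichotomy i k with h | h | h
  · exact absurd hfi (hlt i hi h).ne
  · exact h
  · exact absurd hfi (hck.trans_lt (hf hk hi h)).ne'

def modePairs : Set (ℕ × ℕ) := {p | 1 ≤ p.1 ∧ 1 ≤ p.2 ∧ p ≠ (1, 1)}

def negModes (a b : ℕ → ℝ) (l : ℝ) : Set (ℕ × ℕ) := {p ∈ modePairs | a p.1 + b p.2 / l < 0}

def zeroModes (a b : ℕ → ℝ) (l : ℝ) : Set (ℕ × ℕ) := {p ∈ modePairs | a p.1 + b p.2 / l = 0}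

def degeneracySet (a b : ℕ → ℝ) : Set ℝ := {l | 0 < l ∧ (zeroModes a b l).Nonempty}

/-- The points of `degeneracySet` at which the index need not jump: some vanishing pair enters the
negative set there while another one leaves it. -/
def mixedCrossings (a b : ℕ → ℝ) : Set ℝ :=
  {l ∈ degeneracySet a b | (∃ p ∈ zeroModes a b l, 0 < a p.1) ∧ ∃ p ∈ zeroModes a b l, a p.1 < 0}

structure SpectralPair (a b : ℕ → ℝ) : Prop where
  monotoneOn_fst : MonotoneOn a (Ici 1)
  monotoneOn_snd : MonotoneOn b (Ici 1)
  unbounded_fst : ∀ C, ∃ i, 1 ≤ i ∧ C < a i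
  unbounded_snd : ∀ C, ∃ j, 1 ≤ j ∧ C < b j
  fst_one_neg : a 1 < 0
  snd_one_neg : b 1 < 0
  nondegenerate : ∀ i j, 1 ≤ i → 1 ≤ j → a i = 0 → b j ≠ 0

section Sequences

variable {a b : ℕ → ℝ}

theorem finite_setOf_le_of_monotoneOn (ha : MonotoneOn a (Ici 1))
    (hunb : ∀ C, ∃ i, 1 ≤ i ∧ C < a i) (C : ℝ) : {i | 1 ≤ i ∧ a i ≤ C}.Finite := by
  obtain ⟨I, hI, hCI⟩ := hunb C
  refine (finite_Iio I).subset fun i ⟨hi, hiC⟩ => mem_Iio.2 ?_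
  by_contra! hIi
  exact (hCI.trans_le ((ha hI hi hIi).trans hiC)).false

theorem exists_pos_le_of_monotoneOn (ha : MonotoneOn a (Ici 1))
    (hunb : ∀ C, ∃ i, 1 ≤ i ∧ C < a i) : ∃ δ > 0, ∀ i, 1 ≤ i → 0 < a i → δ ≤ a i := by
  classical
  have hex : ∃ i, 1 ≤ i ∧ 0 < a i := hunb 0
  exact ⟨a (Nat.find hex), (Nat.find_spec hex).2,
    fun i hi hai => ha (Nat.find_spec hex).1 hi (Nat.find_min' hex ⟨hi, hai⟩)⟩

theorem le_of_add_div_nonpos (ha : MonotoneOn a (Ici 1)) (hb : MonotoneOn b (Ici 1))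
    {i j : ℕ} (hi : 1 ≤ i) (hj : 1 ≤ j) {l : ℝ} (hl : 0 < l) (h : a i + b j / l ≤ 0) :
    a i ≤ -b 1 / l ∧ b j ≤ -a 1 * l := by
  have hb1 : b 1 / l ≤ b j / l := div_le_div_of_nonneg_right (hb self_mem_Ici hj hj) hl.le
  have ha1 : a 1 ≤ a i := ha self_mem_Ici hi hi
  refine ⟨by rw [neg_div]; linarith, ?_⟩
  rw [← div_le_iff₀ hl]
  linarith

theorem finite_negModes (ha : MonotoneOn a (Ici 1)) (hb : MonotoneOn b (Ici 1))
    (ha_unbdd : ∀ C, ∃ i, 1 ≤ i ∧ C < a i) (hb_unbdd : ∀ C, ∃ j, 1 ≤ j ∧ C < b j) {l : ℝ}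
    (hl : 0 < l) : (negModes a b l).Finite :=
  ((finite_setOf_le_of_monotoneOn ha ha_unbdd _).prod
    (finite_setOf_le_of_monotoneOn hb hb_unbdd _)).subset
    fun _ ⟨⟨hi, hj, _⟩, hp⟩ =>
      have h := le_of_add_div_nonpos ha hb hi hj hl hp.le
      ⟨⟨hi, h.1⟩, ⟨hj, h.2⟩⟩

theorem negModes_eq_of_forall_notMem {l₁ l₂ : ℝ} (hl₁ : 0 < l₁) (hl₁₂ : l₁ ≤ l₂)
    (hgap : ∀ l, l₁ ≤ l → l ≤ l₂ → l ∉ degeneracySet a b) :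
    negModes a b l₁ = negModes a b l₂ := by
  ext p
  refine and_congr_right fun hp => add_div_neg_iff_of_forall_ne_zero hl₁ (hl₁.trans_le hl₁₂) ?_
  rw [uIcc_of_le hl₁₂]
  exact fun z hz h0 => hgap z hz.1 hz.2 ⟨hl₁.trans_le hz.1, p, hp, h0⟩

theorem mul_add_eq_zero_of_mem_zeroModes {l : ℝ} (hl : l ≠ 0) {p : ℕ × ℕ}
    (hp : p ∈ zeroModes a b l) : a p.1 * l + b p.2 = 0 := by
  have h := hp.2
  field_simp at h
  simpa using h

theorem ne_zero_of_mem_zeroModes (hnd : ∀ i j, 1 ≤ i → 1 ≤ j → a i = 0 → b j ≠ 0) {l : ℝ}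
    (hl : l ≠ 0) {p : ℕ × ℕ} (hp : p ∈ zeroModes a b l) : a p.1 ≠ 0 := fun h =>
  hnd _ _ hp.1.1 hp.1.2.1 h (by simpa [h] using mul_add_eq_zero_of_mem_zeroModes hl hp)

theorem eq_neg_div_of_mem_zeroModes (hnd : ∀ i j, 1 ≤ i → 1 ≤ j → a i = 0 → b j ≠ 0) {l : ℝ}
    (hl : l ≠ 0) {p : ℕ × ℕ} (hp : p ∈ zeroModes a b l) : l = -b p.2 / a p.1 := by
  rw [eq_div_iff (ne_zero_of_mem_zeroModes hnd hl hp)]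
  linarith [mul_add_eq_zero_of_mem_zeroModes hl hp]

theorem add_div_neg_iff_of_isolated {l₀ ε : ℝ} (hε : ε ≤ l₀)
    (hiso : ∀ l ∈ Ioo (l₀ - ε) (l₀ + ε), l ≠ l₀ → l ∉ degeneracySet a b) {l : ℝ}
    (hl : l ∈ Ioo (l₀ - ε) (l₀ + ε)) {p : ℕ × ℕ} (hp : p ∈ modePairs)
    (h₀ : a p.1 + b p.2 / l₀ ≠ 0) : a p.1 + b p.2 / l < 0 ↔ a p.1 + b p.2 / l₀ < 0 := by
  have hε₀ : 0 < ε := by linarith [hl.1, hl.2]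
  have hsub : uIcc l l₀ ⊆ Ioo (l₀ - ε) (l₀ + ε) :=
    ordConnected_Ioo.uIcc_subset hl ⟨by linarith, by linarith⟩
  refine add_div_neg_iff_of_forall_ne_zero (by linarith [hl.1]) (by linarith) fun z hz hz₀ => ?_
  rcases eq_or_ne z l₀ with rfl | hne
  · exact h₀ hz₀
  · exact hiso z (hsub hz) hne ⟨by linarith [(hsub hz).1], p, hp, hz₀⟩

theorem negModes_eq_of_isolated_of_lt {l₀ ε : ℝ} (hε : ε ≤ l₀)
    (hiso : ∀ l ∈ Ioo (l₀ - ε) (l₀ + ε), l ≠ l₀ → l ∉ degeneracySet a b) {l : ℝ}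
    (hl : l ∈ Ioo (l₀ - ε) l₀) :
    negModes a b l = negModes a b l₀ ∪ {p ∈ zeroModes a b l₀ | 0 < a p.1} := by
  have hl_pos : 0 < l := by linarith [hl.1, hl.2]
  ext p
  by_cases hp : p ∈ modePairs
  · by_cases h₀ : a p.1 + b p.2 / l₀ = 0
    · simp [negModes, zeroModes, hp, h₀,
        add_div_neg_iff_of_add_div_eq_zero (hl_pos.trans hl.2) hl_pos h₀,
        mul_neg_iff, hl.2, not_lt.2 hl.2.le]
    · simp [negModes, zeroModes, hp, h₀,
        add_div_neg_iff_of_isolated hε hiso ⟨hl.1, by linarith [hl.1, hl.2]⟩ hp h₀]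
  · simp [negModes, zeroModes, hp]

theorem negModes_eq_of_isolated_of_gt {l₀ ε : ℝ} (hε : ε ≤ l₀)
    (hiso : ∀ l ∈ Ioo (l₀ - ε) (l₀ + ε), l ≠ l₀ → l ∉ degeneracySet a b) {l : ℝ}
    (hl : l ∈ Ioo l₀ (l₀ + ε)) :
    negModes a b l = negModes a b l₀ ∪ {p ∈ zeroModes a b l₀ | a p.1 < 0} := by
  have hl₀ : 0 < l₀ := by linarith [hl.1, hl.2]
  ext p
  by_cases hp : p ∈ modePairs
  · by_cases h₀ : a p.1 + b p.2 / l₀ = 0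
    · simp [negModes, zeroModes, hp, h₀,
        add_div_neg_iff_of_add_div_eq_zero hl₀ (hl₀.trans hl.1) h₀,
        mul_neg_iff, hl.1, not_lt.2 hl.1.le]
    · simp [negModes, zeroModes, hp, h₀,
        add_div_neg_iff_of_isolated hε hiso ⟨by linarith [hl.1, hl.2], hl.2⟩ hp h₀]
  · simp [negModes, zeroModes, hp]

theorem SpectralPair.sub_const {ρ₀ ρ₁ : ℕ → ℝ} {c₀ c₁ : ℝ} (hρ₀ : StrictMonoOn ρ₀ (Ici 1))
    (hρ₁ : StrictMonoOn ρ₁ (Ici 1)) (hρ₀one : ρ₀ 1 = 0) (hρ₁one : ρ₁ 1 = 0)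
    (hρ₀unb : ∀ C, ∃ i, 1 ≤ i ∧ C < ρ₀ i) (hρ₁unb : ∀ C, ∃ j, 1 ≤ j ∧ C < ρ₁ j)
    (hc₀ : 0 < c₀) (hc₁ : 0 < c₁) (hnd : ∀ i j, 1 ≤ i → 1 ≤ j → ρ₀ i = c₀ → ρ₁ j ≠ c₁) :
    SpectralPair (fun i => ρ₀ i - c₀) (fun j => ρ₁ j - c₁) where
  monotoneOn_fst _ hi _ hj hij := sub_le_sub_right (hρ₀.monotoneOn hi hj hij) _
  monotoneOn_snd _ hi _ hj hij := sub_le_sub_right (hρ₁.monotoneOn hi hj hij) _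
  unbounded_fst C := (hρ₀unb (C + c₀)).imp fun _ h => ⟨h.1, by linarith [h.2]⟩
  unbounded_snd C := (hρ₁unb (C + c₁)).imp fun _ h => ⟨h.1, by linarith [h.2]⟩
  fst_one_neg := by simpa [hρ₀one] using hc₀
  snd_one_neg := by simpa [hρ₁one] using hc₁
  nondegenerate i j hi hj hi₀ hj₀ := hnd i j hi hj (sub_eq_zero.1 hi₀) (sub_eq_zero.1 hj₀)

theorem SpectralPair.finite_degeneracySet_inter_Icc (hP : SpectralPair a b) {u : ℝ} (hu : 0 < u)
    (v : ℝ) : (degeneracySet a b ∩ Icc u v).Finite := by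
  have hbox : ({i | 1 ≤ i ∧ a i ≤ -b 1 / u} ×ˢ {j | 1 ≤ j ∧ b j ≤ -a 1 * v}).Finite :=
    (finite_setOf_le_of_monotoneOn hP.monotoneOn_fst hP.unbounded_fst _).prod
      (finite_setOf_le_of_monotoneOn hP.monotoneOn_snd hP.unbounded_snd _)
  refine (hbox.image fun p => -b p.2 / a p.1).subset ?_
  rintro l ⟨⟨hl, p, hp⟩, hul, hlv⟩
  obtain ⟨hi, hj, -⟩ := hp.1
  have hle := le_of_add_div_nonpos hP.monotoneOn_fst hP.monotoneOn_snd hi hj hl hp.2.le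
  refine ⟨p, ⟨⟨hi, hle.1.trans ?_⟩, ⟨hj, hle.2.trans ?_⟩⟩,
    (eq_neg_div_of_mem_zeroModes hP.nondegenerate hl.ne' hp).symm⟩
  · exact div_le_div_of_nonneg_left (neg_nonneg.2 hP.snd_one_neg.le) hu hul
  · exact mul_le_mul_of_nonneg_left hlv (neg_nonneg.2 hP.fst_one_neg.le)

theorem SpectralPair.eventually_notMem_degeneracySet (hP : SpectralPair a b) {l₀ : ℝ}
    (hl₀ : 0 < l₀) : ∀ᶠ l in 𝓝 l₀, l ≠ l₀ → l ∉ degeneracySet a b := by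
  have hfin := (hP.finite_degeneracySet_inter_Icc (half_pos hl₀) (2 * l₀)).sdiff (t := {l₀})
  filter_upwards [hfin.isClosed.compl_mem_nhds fun h => h.2 rfl,
    Icc_mem_nhds (half_lt_self hl₀) (by linarith : l₀ < 2 * l₀)] with l hl hIcc hne hD
  exact hl ⟨⟨hD, hIcc⟩, hne⟩

theorem SpectralPair.finite_mixedCrossings (hP : SpectralPair a b) :
    (mixedCrossings a b).Finite := by
  obtain ⟨δa, hδa, hδa_le⟩ := exists_pos_le_of_monotoneOn hP.monotoneOn_fst hP.unbounded_fst
  obtain ⟨δb, hδb, hδb_le⟩ := exists_pos_le_of_monotoneOn hP.monotoneOn_snd hP.unbounded_snd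
  refine (hP.finite_degeneracySet_inter_Icc
    (div_pos hδb (neg_pos.2 hP.fst_one_neg)) (-b 1 / δa)).subset ?_
  rintro l ⟨hD, ⟨p, hp, hap⟩, ⟨q, hq, haq⟩⟩
  -- a pair vanishing at `l` with `a < 0` has `b > 0`, which bounds `l` below; one with `a > 0`
  -- has `b < 0`, which bounds `l` above
  have hl := hD.1
  have hp₀ := mul_add_eq_zero_of_mem_zeroModes hl.ne' hp
  have hq₀ := mul_add_eq_zero_of_mem_zeroModes hl.ne' hq
  have hδb_q : δb ≤ b q.2 := hδb_le _ hq.1.2.1 (by nlinarith)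
  have ha_q : a 1 ≤ a q.1 := hP.monotoneOn_fst self_mem_Ici hq.1.1 hq.1.1
  have hδa_p : δa ≤ a p.1 := hδa_le _ hp.1.1 hap
  have hb_p : b 1 ≤ b p.2 := hP.monotoneOn_snd self_mem_Ici hp.1.2.1 hp.1.2.1
  refine ⟨hD, ?_, ?_⟩
  · rw [div_le_iff₀ (neg_pos.2 hP.fst_one_neg)]
    nlinarith
  · rw [le_div_iff₀ hδa]
    nlinarith

theorem SpectralPair.exists_negModes_ssubset_or_ssubset (hP : SpectralPair a b) {l₀ : ℝ}
    (hD : l₀ ∈ degeneracySet a b) (hmix : l₀ ∉ mixedCrossings a b) :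
    ∃ ε > 0, ε ≤ l₀ ∧ ∀ l ∈ Ioo (l₀ - ε) l₀, ∀ l' ∈ Ioo l₀ (l₀ + ε),
      negModes a b l ⊂ negModes a b l' ∨ negModes a b l' ⊂ negModes a b l := by
  obtain ⟨ε₀, hε₀, hball⟩ := Metric.eventually_nhds_iff_ball.1
    (hP.eventually_notMem_degeneracySet hD.1)
  set ε := min ε₀ l₀
  have hε : ε ≤ l₀ := min_le_right _ _
  have hiso : ∀ l ∈ Ioo (l₀ - ε) (l₀ + ε), l ≠ l₀ → l ∉ degeneracySet a b := fun l hl =>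
    hball l <| (Real.ball_eq_Ioo _ _).symm ▸
      Ioo_subset_Ioo (by linarith [min_le_left ε₀ l₀]) (by linarith [min_le_left ε₀ l₀]) hl
  refine ⟨ε, lt_min hε₀ hD.1, hε, fun l hl l' hl' => ?_⟩
  rw [negModes_eq_of_isolated_of_lt hε hiso hl, negModes_eq_of_isolated_of_gt hε hiso hl']
  obtain ⟨p, hp⟩ := hD.2
  have hp_neg : p ∉ negModes a b l₀ := fun h => h.2.ne hp.2
  rcases (ne_zero_of_mem_zeroModes hP.nondegenerate hD.1.ne' hp).lt_or_gt with hap | hap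
  · have hpos : {q ∈ zeroModes a b l₀ | 0 < a q.1} = ∅ :=
      eq_empty_of_forall_notMem fun q hq => hmix ⟨hD, ⟨q, hq⟩, ⟨p, hp, hap⟩⟩
    rw [hpos, union_empty]
    exact Or.inl (ssubset_union_left_iff.2 fun h => hp_neg (h ⟨hp, hap⟩))
  · have hneg : {q ∈ zeroModes a b l₀ | a q.1 < 0} = ∅ :=
      eq_empty_of_forall_notMem fun q hq => hmix ⟨hD, ⟨p, hp, hap⟩, ⟨q, hq⟩⟩
    rw [hneg, union_empty]
    exact Or.inr (ssubset_union_left_iff.2 fun h => hp_neg (h ⟨hp, hap⟩))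

end Sequences

theorem stmt_9
    (m : ℕ) (hm : 3 ≤ m)
    (κ₀ κ₁ : ℝ)
    (ρ₀ ρ₁ : ℕ → ℝ)
    (hρ₀one : ρ₀ 1 = 0) (hρ₁one : ρ₁ 1 = 0)
    (hρ₀mono : ∀ i j : ℕ, 1 ≤ i → i < j → ρ₀ i < ρ₀ j)
    (hρ₁mono : ∀ i j : ℕ, 1 ≤ i → i < j → ρ₁ i < ρ₁ j)
    (hρ₀unb : ∀ C : ℝ, ∃ i : ℕ, 1 ≤ i ∧ C < ρ₀ i)
    (hρ₁unb : ∀ C : ℝ, ∃ j : ℕ, 1 ≤ j ∧ C < ρ₁ j)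
    (σ : ℕ → ℕ → ℝ → ℝ)
    (hσ : ∀ (i j : ℕ) (l : ℝ), 0 < l →
      σ i j l = ρ₀ i + ρ₁ j / l - (κ₀ + κ₁ / l) / ((m : ℝ) - 1))
    (hκ₀ : 0 < κ₀) (hκ₁ : 0 < κ₁)
    (istar jstar : ℕ)
    (histar1 : 1 ≤ istar) (histar2 : κ₀ / ((m : ℝ) - 1) ≤ ρ₀ istar)
    (histar3 : ∀ i : ℕ, 1 ≤ i → i < istar → ρ₀ i < κ₀ / ((m : ℝ) - 1))
    (hjstar1 : 1 ≤ jstar) (hjstar2 : κ₁ / ((m : ℝ) - 1) ≤ ρ₁ jstar)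
    (hjstar3 : ∀ j : ℕ, 1 ≤ j → j < jstar → ρ₁ j < κ₁ / ((m : ℝ) - 1))
    (hnondeg : ¬ (ρ₀ istar = κ₀ / ((m : ℝ) - 1) ∧ ρ₁ jstar = κ₁ / ((m : ℝ) - 1)))
    (Λ : Set ℝ)
    (hΛ : Λ = {l : ℝ | 0 < l ∧ ∃ i j : ℕ, 1 ≤ i ∧ 1 ≤ j ∧ (i, j) ≠ (1, 1) ∧ σ i j l = 0})
    (μ₀ μ₁ : ℕ → ℕ)
    (hμ₀ : ∀ i : ℕ, 1 ≤ μ₀ i) (hμ₁ : ∀ j : ℕ, 1 ≤ μ₁ j)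
    (N : ℝ → ℕ)
    (hN : ∀ l : ℝ, 0 < l → ∀ s : Finset (ℕ × ℕ),
      (∀ p : ℕ × ℕ, p ∈ s ↔ (1 ≤ p.1 ∧ 1 ≤ p.2 ∧ p ≠ (1, 1) ∧ σ p.1 p.2 l < 0)) →
      N l = ∑ p ∈ s, μ₀ p.1 * μ₁ p.2) :
    (∀ l : ℝ, 0 < l →
      {p : ℕ × ℕ | 1 ≤ p.1 ∧ 1 ≤ p.2 ∧ p ≠ (1, 1) ∧ σ p.1 p.2 l < 0}.Finite) ∧
    (∀ l₁ l₂ : ℝ, 0 < l₁ → l₁ ≤ l₂ → (∀ l : ℝ, l₁ ≤ l → l ≤ l₂ → l ∉ Λ) →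
      N l₁ = N l₂) ∧
    (∃ F : Set ℝ, F.Finite ∧ ∀ lstar ∈ Λ, lstar ∉ F →
      ∃ ε > (0 : ℝ), ∀ l ∈ Set.Ioo (lstar - ε) lstar, ∀ l' ∈ Set.Ioo lstar (lstar + ε),
        N l ≠ N l') := by
  have hm' : (0 : ℝ) < m - 1 := by
    have : (3 : ℝ) ≤ m := by exact_mod_cast hm
    linarith
  have hρ₀ : StrictMonoOn ρ₀ (Ici 1) := fun i hi _ _ hij => hρ₀mono i _ hi hij
  have hρ₁ : StrictMonoOn ρ₁ (Ici 1) := fun i hi _ _ hij => hρ₁mono i _ hi hij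
  set a : ℕ → ℝ := fun i => ρ₀ i - κ₀ / (m - 1)
  set b : ℕ → ℝ := fun j => ρ₁ j - κ₁ / (m - 1)
  have hP : SpectralPair a b := .sub_const hρ₀ hρ₁ hρ₀one hρ₁one hρ₀unb hρ₁unb
    (div_pos hκ₀ hm') (div_pos hκ₁ hm') fun i j hi hj hi₀ hj₀ => hnondeg
      ⟨hρ₀.eq_of_apply_eq_of_forall_lt histar1 histar2 histar3 hi hi₀ ▸ hi₀,
        hρ₁.eq_of_apply_eq_of_forall_lt hjstar1 hjstar2 hjstar3 hj hj₀ ▸ hj₀⟩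
  have hσab : ∀ i j l, 0 < l → σ i j l = a i + b j / l := fun i j l hl => by
    rw [hσ i j l hl]
    ring
  have hS : ∀ l, 0 < l →
      {p : ℕ × ℕ | 1 ≤ p.1 ∧ 1 ≤ p.2 ∧ p ≠ (1, 1) ∧ σ p.1 p.2 l < 0} = negModes a b l :=
    fun l hl => by ext p; simp [negModes, modePairs, hσab _ _ _ hl, and_assoc]
  have hΛ' : Λ = degeneracySet a b := by
    subst hΛ
    ext l
    exact and_congr_right fun hl => by
      simp [zeroModes, modePairs, Set.Nonempty, hσab _ _ _ hl, and_assoc]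
  have hfin : ∀ l, 0 < l → (negModes a b l).Finite := fun _ =>
    finite_negModes hP.monotoneOn_fst hP.monotoneOn_snd hP.unbounded_fst hP.unbounded_snd
  have hN' : ∀ l (hl : 0 < l), N l = ∑ p ∈ (hfin l hl).toFinset, μ₀ p.1 * μ₁ p.2 :=
    fun l hl => hN l hl _ fun p => by rw [Finite.mem_toFinset, ← hS l hl]; rfl
  have hN_lt : ∀ l l' (hl : 0 < l) (hl' : 0 < l'), negModes a b l ⊂ negModes a b l' →
      N l < N l' := fun l l' hl hl' h => by
    rw [hN' l hl, hN' l' hl']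
    exact Finset.sum_lt_sum_of_ssubset_of_pos (Finite.toFinset_ssubset_toFinset.2 h)
      fun p _ => Nat.mul_pos (hμ₀ p.1) (hμ₁ p.2)
  refine ⟨fun l hl => hS l hl ▸ hfin l hl, fun l₁ l₂ hl₁ hl₁₂ hgap => ?_, mixedCrossings a b,
    hP.finite_mixedCrossings, fun l₀ hl₀ hmix => ?_⟩
  · rw [hN' l₁ hl₁, hN' l₂ (hl₁.trans_le hl₁₂)]
    exact Finset.sum_congr (Finite.toFinset_inj.2 (negModes_eq_of_forall_notMem hl₁ hl₁₂
      (hΛ' ▸ hgap))) fun _ _ => rfl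
  · obtain ⟨ε, hε, hεl₀, hjump⟩ := hP.exists_negModes_ssubset_or_ssubset (hΛ' ▸ hl₀) hmix
    refine ⟨ε, hε, fun l hl l' hl' => ?_⟩
    have hl_pos : 0 < l := by linarith [hl.1]
    have hl'_pos : 0 < l' := by linarith [hl'.1]
    rcases hjump l hl l' hl' with h | h
    exacts [(hN_lt l l' hl_pos hl'_pos h).ne, (hN_lt l' l hl'_pos hl_pos h).ne']
end

section
/- Assume κ¹ ≤ 0 < κ⁰ and that the pair is nondegenerate. Then for indices (i,j) ≠ (1,1), the function σ_{i,j} has a zero in (0,∞) if and only if ρ⁰_i < κ⁰/(m−1) and ρ¹_j > κ¹/(m−1); moreover the degeneracy set Λ = { λ ∈ (0,∞) : σ_{i,j}(λ) = 0 for some (i,j) ≠ (1,1) } is infinite, bounded away from 0, has no accumulation points in (0,∞), and is unbounded above; equivalently, Λ is the range of a strictly increasing sequence tending to +∞. -/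
/-!
Put `K₀ = κ⁰/(m-1) > 0` and `K₁ = κ¹/(m-1) ≤ 0`. Then
`σ_{i,j}(λ) = (ρ⁰_i - K₀) + (ρ¹_j - K₁)/λ` with `ρ¹_j - K₁ ≥ 0`, and nondegeneracy says the two
coefficients never vanish together, so a zero of `σ_{i,j}` in `(0, ∞)` needs `ρ⁰_i < K₀` and is
then the single point `(ρ¹_j - K₁)/(K₀ - ρ⁰_i)`. Only the finitely many
`i < i_*` satisfy `ρ⁰_i < K₀`, and for such `i` the zero is at most `M` only for finitely many `j`
since `ρ¹` is unbounded; hence `Λ` meets every half-line `(-∞, M]` in a finite set. The zeros with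
`i = 1` make `Λ` infinite. An infinite set of reals with finite truncations has a least element,
is discrete and unbounded, and, being a locally finite linear order with a bottom and no top, is
order isomorphic to `ℕ`.
-/

open Set Filter

namespace Set

variable {S : Set ℝ}

theorem exists_isLeast_of_finite_inter_Iic (hS : ∀ M, (S ∩ Iic M).Finite) (hne : S.Nonempty) :
    ∃ b, IsLeast S b := by
  obtain ⟨s, hs⟩ := hne
  obtain ⟨b, ⟨hbS, hbs⟩, hmin⟩ := exists_min_image _ id (hS s) ⟨s, hs, mem_Iic.2 le_rfl⟩
  refine ⟨b, hbS, fun x hx => ?_⟩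
  rcases le_total x s with hxs | hsx
  · exact hmin x ⟨hx, hxs⟩
  · exact hbs.trans hsx

theorem not_bddAbove_of_finite_inter_Iic (hS : ∀ M, (S ∩ Iic M).Finite) (hinf : S.Infinite) :
    ¬BddAbove S := fun ⟨M, hM⟩ => hinf <| (hS M).subset fun _ hx => ⟨hx, hM hx⟩

theorem exists_pos_le_abs_sub_of_finite_inter_Iic (hS : ∀ M, (S ∩ Iic M).Finite) (x : ℝ) :
    ∃ ε > 0, ∀ l ∈ S, l ≠ x → ε ≤ |l - x| := by
  have hclosed : IsClosed ((S ∩ Iic (x + 1)) \ {x}) := (hS (x + 1)).sdiff.isClosed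
  obtain ⟨ε, hε, hball⟩ := Metric.isOpen_iff.mp hclosed.isOpen_compl x fun h => h.2 rfl
  refine ⟨min ε 1, lt_min hε one_pos, fun l hl hlx => ?_⟩
  rcases le_or_gt l (x + 1) with hle | hgt
  · have : l ∉ Metric.ball x ε := fun h => hball h ⟨⟨hl, hle⟩, hlx⟩
    rw [Metric.mem_ball, Real.dist_eq, not_lt] at this
    exact (min_le_left _ _).trans this
  · rw [abs_of_pos (by linarith)]
    linarith [min_le_right ε 1]

theorem exists_strictMono_range_eq_of_finite_inter_Iic (hS : ∀ M, (S ∩ Iic M).Finite)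
    (hinf : S.Infinite) :
    ∃ u : ℕ → ℝ, StrictMono u ∧ Tendsto u atTop atTop ∧ S = range u := by
  let : LocallyFiniteOrder S := LocallyFiniteOrder.ofFiniteIcc fun a b =>
    ((hS b).preimage Subtype.val_injective.injOn).subset fun x hx => ⟨x.2, hx.2⟩
  let := LinearLocallyFiniteOrder.succOrder S
  let := LinearLocallyFiniteOrder.predOrder S
  obtain ⟨b, hb⟩ := exists_isLeast_of_finite_inter_Iic hS hinf.nonempty
  let : OrderBot S := { bot := ⟨b, hb.1⟩, bot_le := fun x => hb.2 x.2 }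
  have hunb := not_bddAbove_iff.mp (not_bddAbove_of_finite_inter_Iic hS hinf)
  have : NoMaxOrder S := ⟨fun x => by
    obtain ⟨y, hyS, hxy⟩ := hunb x
    exact ⟨⟨y, hyS⟩, hxy⟩⟩
  let e : ℕ ≃o S := (orderIsoNatOfLinearSuccPredArch (ι := S)).symm
  have hrange : S = range fun n => (e n : ℝ) := by
    ext x
    exact ⟨fun hx => ⟨e.symm ⟨x, hx⟩, by simp⟩, by rintro ⟨n, rfl⟩; exact (e n).2⟩
  refine ⟨fun n => e n, fun _ _ h => e.strictMono h, ?_, hrange⟩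
  refine tendsto_atTop_atTop_of_monotone (fun _ _ h => e.monotone h) fun M => ?_
  obtain ⟨y, hyS, hMy⟩ := hunb M
  exact ⟨e.symm ⟨y, hyS⟩, by simpa using hMy.le⟩

theorem finite_image2_div_inter_Iic {ι κ : Type*} {a : ι → ℝ} {b : κ → ℝ} {I : Set ι}
    {J : Set κ} {A : ℝ} (hI : I.Finite) (ha : ∀ i ∈ I, 0 < a i ∧ a i ≤ A)
    (hJ : ∀ C, {j ∈ J | b j ≤ C}.Finite) (M : ℝ) :
    (image2 (fun i j => b j / a i) I J ∩ Iic M).Finite := by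
  refine (hI.image2 (fun i j => b j / a i) (hJ (|M| * A))).subset ?_
  rintro _ ⟨⟨i, hi, j, hj, rfl⟩, hM⟩
  refine ⟨i, hi, j, ⟨hj, ?_⟩, rfl⟩
  obtain ⟨hai, haA⟩ := ha i hi
  calc b j = b j / a i * a i := (div_mul_cancel₀ _ hai.ne').symm
    _ ≤ M * a i := mul_le_mul_of_nonneg_right hM hai.le
    _ ≤ |M| * A := mul_le_mul (le_abs_self M) haA hai.le (abs_nonneg M)

end Set

theorem MonotoneOn.setOf_lt_subset_Iio {α β : Type*} [LinearOrder α] [LinearOrder β]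
    {ρ : α → β} {s : Set α} {K : β} {n : α} (hmono : MonotoneOn ρ s) (hn : n ∈ s)
    (hKn : K ≤ ρ n) : {i ∈ s | ρ i < K} ⊆ Iio n := fun i ⟨hi, hiK⟩ =>
  show i < n from not_le.1 fun hni => (hKn.trans (hmono hn hi hni)).not_gt hiK

theorem MonotoneOn.finite_setOf_le {β : Type*} [LinearOrder β] {ρ : ℕ → β} {s : Set ℕ}
    (hmono : MonotoneOn ρ s) (hunb : ∀ C, ∃ i ∈ s, C < ρ i) (C : β) :
    {i ∈ s | ρ i ≤ C}.Finite := by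
  obtain ⟨n, hn, hCn⟩ := hunb C
  exact (finite_Iio n).subset fun i ⟨hi, hiC⟩ =>
    hmono.setOf_lt_subset_Iio hn le_rfl ⟨hi, hiC.trans_lt hCn⟩

theorem StrictMonoOn.eq_of_apply_eq_of_forall_lt_s12 {α β : Type*} [LinearOrder α] [LinearOrder β]
    {ρ : α → β} {s : Set α} {K : β} {n i : α} (hmono : StrictMonoOn ρ s) (hn : n ∈ s)
    (hKn : K ≤ ρ n) (hlt : ∀ i ∈ s, i < n → ρ i < K) (hi : i ∈ s) (hiK : ρ i = K) : i = n :=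
  le_antisymm ((hmono.le_iff_le hi hn).1 (hiK ▸ hKn)) (not_lt.1 fun h => (hlt i hi h).ne hiK)

namespace Real

theorem add_div_eq_zero_iff {a b l : ℝ} (ha : a ≠ 0) (hl : l ≠ 0) :
    a + b / l = 0 ↔ l = b / -a := by
  rw [eq_div_iff (neg_ne_zero.2 ha)]
  field_simp
  constructor <;> intro h <;> linarith

theorem add_div_eq_zero_iff_of_nonneg {a b l : ℝ} (hb : 0 ≤ b) (hab : ¬(a = 0 ∧ b = 0))
    (hl : 0 < l) : a + b / l = 0 ↔ a < 0 ∧ l = b / -a := by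
  rcases eq_or_ne a 0 with rfl | ha
  · have : b ≠ 0 := fun hb0 => hab ⟨rfl, hb0⟩
    simp [this, hl.ne']
  rw [add_div_eq_zero_iff ha hl.ne']
  refine ⟨fun h => ⟨not_le.1 fun ha' => ?_, h⟩, And.right⟩
  have : b / -a ≤ 0 := div_nonpos_of_nonneg_of_nonpos hb (by linarith [lt_of_le_of_ne ha' ha.symm])
  linarith

theorem exists_pos_add_div_eq_zero_iff {a b : ℝ} (hb : 0 ≤ b) (hab : ¬(a = 0 ∧ b = 0)) :
    (∃ l, 0 < l ∧ a + b / l = 0) ↔ a < 0 ∧ 0 < b := by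
  constructor
  · rintro ⟨l, hl, h⟩
    obtain ⟨ha, rfl⟩ := (add_div_eq_zero_iff_of_nonneg hb hab hl).1 h
    exact ⟨ha, (div_pos_iff_of_pos_right (neg_pos.2 ha)).1 hl⟩
  · rintro ⟨ha, hb⟩
    have hl : 0 < b / -a := div_pos hb (neg_pos.2 ha)
    exact ⟨_, hl, (add_div_eq_zero_iff_of_nonneg hb.le hab hl).2 ⟨ha, rfl⟩⟩

end Real

section JacobiEigenvalues

variable {σ : ℕ → ℕ → ℝ → ℝ} {ρ₀ ρ₁ : ℕ → ℝ} {K₀ K₁ : ℝ}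

theorem sigma_eq_zero_iff (hσ : ∀ i j l, 0 < l → σ i j l = ρ₀ i - K₀ + (ρ₁ j - K₁) / l)
    {i j : ℕ} {l : ℝ} (hρ₁ : K₁ ≤ ρ₁ j) (hnd : ¬(ρ₀ i = K₀ ∧ ρ₁ j = K₁)) (hl : 0 < l) :
    σ i j l = 0 ↔ ρ₀ i < K₀ ∧ l = (ρ₁ j - K₁) / (K₀ - ρ₀ i) := by
  rw [hσ i j l hl, Real.add_div_eq_zero_iff_of_nonneg (sub_nonneg.2 hρ₁)
    (by rwa [sub_eq_zero, sub_eq_zero]) hl, sub_neg, neg_sub]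

theorem exists_pos_sigma_eq_zero_iff
    (hσ : ∀ i j l, 0 < l → σ i j l = ρ₀ i - K₀ + (ρ₁ j - K₁) / l) {i j : ℕ} (hρ₁ : K₁ ≤ ρ₁ j)
    (hnd : ¬(ρ₀ i = K₀ ∧ ρ₁ j = K₁)) :
    (∃ l, 0 < l ∧ σ i j l = 0) ↔ ρ₀ i < K₀ ∧ K₁ < ρ₁ j := by
  rw [← sub_neg, ← sub_pos (a := ρ₁ j), ← Real.exists_pos_add_div_eq_zero_iff (sub_nonneg.2 hρ₁)
    (by rwa [sub_eq_zero, sub_eq_zero])]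
  exact exists_congr fun l => and_congr_right fun hl => by rw [hσ i j l hl]

theorem finite_zeros_inter_Iic (hσ : ∀ i j l, 0 < l → σ i j l = ρ₀ i - K₀ + (ρ₁ j - K₁) / l)
    (hρ₀ : ∀ i, 1 ≤ i → 0 ≤ ρ₀ i) (hρ₁ : ∀ j, 1 ≤ j → K₁ ≤ ρ₁ j)
    (hnd : ∀ i j, 1 ≤ i → 1 ≤ j → ¬(ρ₀ i = K₀ ∧ ρ₁ j = K₁))
    (hfin₀ : {i ∈ Ici 1 | ρ₀ i < K₀}.Finite) (hfin₁ : ∀ C, {j ∈ Ici 1 | ρ₁ j ≤ C}.Finite)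
    (M : ℝ) : ({l | 0 < l ∧ ∃ i j, 1 ≤ i ∧ 1 ≤ j ∧ σ i j l = 0} ∩ Iic M).Finite := by
  refine (finite_image2_div_inter_Iic (a := (K₀ - ρ₀ ·)) (b := (ρ₁ · - K₁)) (A := K₀) hfin₀
    (fun i hi => ⟨sub_pos.2 hi.2, sub_le_self _ (hρ₀ i hi.1)⟩)
    (fun C => (hfin₁ (C + K₁)).subset fun j ⟨hj, hjC⟩ => ⟨hj, by linarith⟩) M).subset ?_
  rintro l ⟨⟨hl, i, j, hi, hj, h⟩, hlM⟩
  obtain ⟨hiK, rfl⟩ := (sigma_eq_zero_iff hσ (hρ₁ j hj) (hnd i j hi hj) hl).1 h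
  exact ⟨⟨i, ⟨hi, hiK⟩, j, hj, rfl⟩, hlM⟩

theorem infinite_zeros_of_first_index
    (hσ : ∀ i j l, 0 < l → σ i j l = ρ₀ i - K₀ + (ρ₁ j - K₁) / l) (hρ₀ : ρ₀ 1 < K₀)
    (hmono₁ : StrictMonoOn ρ₁ (Ici 1)) (hρ₁ : K₁ ≤ ρ₁ 1) :
    {l | 0 < l ∧ ∃ j, 1 < j ∧ σ 1 j l = 0}.Infinite := by
  have hden : 0 < K₀ - ρ₀ 1 := sub_pos.2 hρ₀
  refine infinite_of_injOn_mapsTo (f := fun j => (ρ₁ j - K₁) / (K₀ - ρ₀ 1)) (s := Ioi 1)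
    (fun i hi j hj h => hmono₁.injOn (mem_Ici.2 hi.le) (mem_Ici.2 hj.le) ?_) (fun j hj => ?_)
    (Ioi_infinite 1)
  · simpa [hden.ne'] using h
  · have hρ₁j : K₁ < ρ₁ j := hρ₁.trans_lt (hmono₁ self_mem_Ici (mem_Ici.2 (le_of_lt hj)) hj)
    have hl : 0 < (ρ₁ j - K₁) / (K₀ - ρ₀ 1) := div_pos (sub_pos.2 hρ₁j) hden
    exact ⟨hl, j, hj, (sigma_eq_zero_iff hσ hρ₁j.le (fun h => hρ₀.ne h.1) hl).2 ⟨hρ₀, rfl⟩⟩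

end JacobiEigenvalues

theorem stmt_12_general
    (m : ℕ) (hm : 3 ≤ m)
    (κ₀ κ₁ : ℝ)
    (ρ₀ ρ₁ : ℕ → ℝ)
    (hρ₀one : ρ₀ 1 = 0) (hρ₁one : ρ₁ 1 = 0)
    (hρ₀mono : ∀ i j : ℕ, 1 ≤ i → i < j → ρ₀ i < ρ₀ j)
    (hρ₁mono : ∀ i j : ℕ, 1 ≤ i → i < j → ρ₁ i < ρ₁ j)
    (hρ₁unb : ∀ C : ℝ, ∃ j : ℕ, 1 ≤ j ∧ C < ρ₁ j)
    (σ : ℕ → ℕ → ℝ → ℝ)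
    (hσ : ∀ (i j : ℕ) (l : ℝ), 0 < l →
      σ i j l = ρ₀ i + ρ₁ j / l - (κ₀ + κ₁ / l) / ((m : ℝ) - 1))
    (istar jstar : ℕ)
    (histar1 : 1 ≤ istar) (histar2 : κ₀ / ((m : ℝ) - 1) ≤ ρ₀ istar)
    (histar3 : ∀ i : ℕ, 1 ≤ i → i < istar → ρ₀ i < κ₀ / ((m : ℝ) - 1))
    (hjstar1 : 1 ≤ jstar) (hjstar2 : κ₁ / ((m : ℝ) - 1) ≤ ρ₁ jstar)
    (hjstar3 : ∀ j : ℕ, 1 ≤ j → j < jstar → ρ₁ j < κ₁ / ((m : ℝ) - 1))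
    (hnondeg : ¬ (ρ₀ istar = κ₀ / ((m : ℝ) - 1) ∧ ρ₁ jstar = κ₁ / ((m : ℝ) - 1)))
    (Λ : Set ℝ)
    (hΛ : Λ = {l : ℝ | 0 < l ∧ ∃ i j : ℕ, 1 ≤ i ∧ 1 ≤ j ∧ (i, j) ≠ (1, 1) ∧ σ i j l = 0})
    (hκ₀ : 0 < κ₀) (hκ₁ : κ₁ ≤ 0) :
    (∀ i j : ℕ, 1 ≤ i → 1 ≤ j → (i, j) ≠ (1, 1) →
      ((∃ l : ℝ, 0 < l ∧ σ i j l = 0) ↔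
        (ρ₀ i < κ₀ / ((m : ℝ) - 1) ∧ κ₁ / ((m : ℝ) - 1) < ρ₁ j))) ∧
    Λ.Infinite ∧ (∃ c > (0 : ℝ), ∀ l ∈ Λ, c ≤ l) ∧
    (∀ x : ℝ, 0 < x → ∃ ε > (0 : ℝ), ∀ l ∈ Λ, l ≠ x → ε ≤ |l - x|) ∧
    ¬ BddAbove Λ ∧
    (∃ u : ℕ → ℝ, StrictMono u ∧ Filter.Tendsto u Filter.atTop Filter.atTop ∧
      Λ = Set.range u) := by
  set K₀ := κ₀ / ((m : ℝ) - 1)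
  set K₁ := κ₁ / ((m : ℝ) - 1)
  have hm1 : (0 : ℝ) < m - 1 := sub_pos.2 (Nat.one_lt_cast.2 (by omega))
  have hmono₀ : StrictMonoOn ρ₀ (Ici 1) := fun i hi j _ hij => hρ₀mono i j hi hij
  have hmono₁ : StrictMonoOn ρ₁ (Ici 1) := fun i hi j _ hij => hρ₁mono i j hi hij
  have hρ₀ : ∀ i, 1 ≤ i → 0 ≤ ρ₀ i := fun i hi => hρ₀one ▸ hmono₀.monotoneOn self_mem_Ici hi hi
  have hρ₁ : ∀ j, 1 ≤ j → K₁ ≤ ρ₁ j := fun j hj => (div_nonpos_of_nonpos_of_nonneg hκ₁ hm1.le).trans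
    (hρ₁one ▸ hmono₁.monotoneOn self_mem_Ici hj hj)
  have hσ' : ∀ i j l, 0 < l → σ i j l = ρ₀ i - K₀ + (ρ₁ j - K₁) / l := fun i j l hl => by
    rw [hσ i j l hl]
    ring
  have hnd : ∀ i j, 1 ≤ i → 1 ≤ j → ¬(ρ₀ i = K₀ ∧ ρ₁ j = K₁) := by
    rintro i j hi hj ⟨hiK, hjK⟩
    obtain rfl := hmono₀.eq_of_apply_eq_of_forall_lt_s12 histar1 histar2 histar3 hi hiK
    obtain rfl := hmono₁.eq_of_apply_eq_of_forall_lt_s12 hjstar1 hjstar2 hjstar3 hj hjK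
    exact hnondeg ⟨hiK, hjK⟩
  have hfin : ∀ M, (Λ ∩ Iic M).Finite := fun M =>
    (finite_zeros_inter_Iic hσ' hρ₀ hρ₁ hnd
      ((finite_Iio istar).subset (hmono₀.monotoneOn.setOf_lt_subset_Iio histar1 histar2))
      (hmono₁.monotoneOn.finite_setOf_le hρ₁unb) M).subset
      (inter_subset_inter_left _ (hΛ ▸ fun l ⟨hl, i, j, hi, hj, _, h⟩ => ⟨hl, i, j, hi, hj, h⟩))
  have hinf : Λ.Infinite := by
    refine (infinite_zeros_of_first_index hσ' (hρ₀one ▸ div_pos hκ₀ hm1) hmono₁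
      (hρ₁ 1 le_rfl)).mono ?_
    rintro l ⟨hl, j, hj, h⟩
    exact hΛ ▸ ⟨hl, 1, j, le_rfl, hj.le, fun h => hj.ne' (congrArg Prod.snd h), h⟩
  obtain ⟨c, hcΛ, hc⟩ := exists_isLeast_of_finite_inter_Iic hfin hinf.nonempty
  exact ⟨fun i j hi hj _ => exists_pos_sigma_eq_zero_iff hσ' (hρ₁ j hj) (hnd i j hi hj), hinf,
    ⟨c, (hΛ ▸ hcΛ).1, hc⟩, fun x _ => exists_pos_le_abs_sub_of_finite_inter_Iic hfin x,
    not_bddAbove_of_finite_inter_Iic hfin hinf,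
    exists_strictMono_range_eq_of_finite_inter_Iic hfin hinf⟩

theorem stmt_12
    (m : ℕ) (hm : 3 ≤ m)
    (κ₀ κ₁ : ℝ)
    (ρ₀ ρ₁ : ℕ → ℝ)
    (hρ₀one : ρ₀ 1 = 0) (hρ₁one : ρ₁ 1 = 0)
    (hρ₀mono : ∀ i j : ℕ, 1 ≤ i → i < j → ρ₀ i < ρ₀ j)
    (hρ₁mono : ∀ i j : ℕ, 1 ≤ i → i < j → ρ₁ i < ρ₁ j)
    (hρ₀unb : ∀ C : ℝ, ∃ i : ℕ, 1 ≤ i ∧ C < ρ₀ i)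
    (hρ₁unb : ∀ C : ℝ, ∃ j : ℕ, 1 ≤ j ∧ C < ρ₁ j)
    (σ : ℕ → ℕ → ℝ → ℝ)
    (hσ : ∀ (i j : ℕ) (l : ℝ), 0 < l →
      σ i j l = ρ₀ i + ρ₁ j / l - (κ₀ + κ₁ / l) / ((m : ℝ) - 1))
    (istar jstar : ℕ)
    (histar1 : 1 ≤ istar) (histar2 : κ₀ / ((m : ℝ) - 1) ≤ ρ₀ istar)
    (histar3 : ∀ i : ℕ, 1 ≤ i → i < istar → ρ₀ i < κ₀ / ((m : ℝ) - 1))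
    (hjstar1 : 1 ≤ jstar) (hjstar2 : κ₁ / ((m : ℝ) - 1) ≤ ρ₁ jstar)
    (hjstar3 : ∀ j : ℕ, 1 ≤ j → j < jstar → ρ₁ j < κ₁ / ((m : ℝ) - 1))
    (hnondeg : ¬ (ρ₀ istar = κ₀ / ((m : ℝ) - 1) ∧ ρ₁ jstar = κ₁ / ((m : ℝ) - 1)))
    (Λ : Set ℝ)
    (hΛ : Λ = {l : ℝ | 0 < l ∧ ∃ i j : ℕ, 1 ≤ i ∧ 1 ≤ j ∧ (i, j) ≠ (1, 1) ∧ σ i j l = 0})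
    (hκ₀ : 0 < κ₀) (hκ₁ : κ₁ ≤ 0) :
    (∀ i j : ℕ, 1 ≤ i → 1 ≤ j → (i, j) ≠ (1, 1) →
      ((∃ l : ℝ, 0 < l ∧ σ i j l = 0) ↔
        (ρ₀ i < κ₀ / ((m : ℝ) - 1) ∧ κ₁ / ((m : ℝ) - 1) < ρ₁ j))) ∧
    Λ.Infinite ∧ (∃ c > (0 : ℝ), ∀ l ∈ Λ, c ≤ l) ∧
    (∀ x : ℝ, 0 < x → ∃ ε > (0 : ℝ), ∀ l ∈ Λ, l ≠ x → ε ≤ |l - x|) ∧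
    ¬ BddAbove Λ ∧
    (∃ u : ℕ → ℝ, StrictMono u ∧ Filter.Tendsto u Filter.atTop Filter.atTop ∧
      Λ = Set.range u) :=
  stmt_12_general m hm κ₀ κ₁ ρ₀ ρ₁ hρ₀one hρ₁one hρ₀mono hρ₁mono hρ₁unb σ hσ istar jstar histar1
    histar2 histar3 hjstar1 hjstar2 hjstar3 hnondeg Λ hΛ hκ₀ hκ₁
end

section
/- For every integer n ≥ 2 and all integers i,j ≥ 0 with i + j > 0: the function σ_{i,j} has a zero in the interval (0,1] if and only if j = 0 and i ≥ 1, and in that case its unique zero in (0,1] is λ_i(n) = n(n−1) / ( i(i+n−1)(2n−1) − n(n−1) ). -/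
/-!
Write `ρ_k = k(k+n-1)` and `c = n(n-1)/(2n-1)`, so that `σ_{i,j}(λ) = (ρ_j - c)/λ + ρ_i - c`.
Everything follows from `0 < c` and `2c < n ≤ ρ_k` for `k ≥ 1`. If `j ≥ 1` then on `(0,1]`,
`σ_{i,j}(λ) ≥ ρ_j - c - c > 0`; if `i = j = 0` then `σ = -c/λ - c < 0`; and if `j = 0 < i`
the unique zero `c/(ρ_i - c)` is at most `1` because `2c < ρ_i`.
-/

namespace JacobiHilbertEinstein

/-- `ρ_k`, the `k`-th Laplace eigenvalue of the round `n`-sphere. -/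
def sphereEigenvalue (n k : ℕ) : ℝ := (k : ℝ) * ((k : ℝ) + (n : ℝ) - 1)

/-- `c = n(n-1)/(2n-1)`, where `n(n-1)` is the scalar curvature of the round `n`-sphere. -/
noncomputable def jacobiShift (n : ℕ) : ℝ := (n : ℝ) * ((n : ℝ) - 1) / (2 * (n : ℝ) - 1)

/-- `σ_{i,j}(λ)`. -/
noncomputable def jacobiEigenvalue (n i j : ℕ) (l : ℝ) : ℝ :=
  (1 / l) * (sphereEigenvalue n j - jacobiShift n) + sphereEigenvalue n i - jacobiShift n

/-- `λ_i(n)`. -/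
noncomputable def criticalScale (n i : ℕ) : ℝ :=
  (n : ℝ) * ((n : ℝ) - 1) / ((i : ℝ) * ((i : ℝ) + (n : ℝ) - 1) * (2 * (n : ℝ) - 1) -
    (n : ℝ) * ((n : ℝ) - 1))

variable {n i j : ℕ} {l : ℝ}

@[simp]
lemma sphereEigenvalue_zero (n : ℕ) : sphereEigenvalue n 0 = 0 := by
  simp [sphereEigenvalue]

lemma natCast_le_sphereEigenvalue {k : ℕ} (hk : 1 ≤ k) : (n : ℝ) ≤ sphereEigenvalue n k := by
  unfold sphereEigenvalue
  have : (1 : ℝ) ≤ k := by exact_mod_cast hk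
  nlinarith [(n.cast_nonneg : (0 : ℝ) ≤ n)]

lemma sphereEigenvalue_nonneg (n k : ℕ) : 0 ≤ sphereEigenvalue n k := by
  rcases Nat.eq_zero_or_pos k with rfl | hk
  · simp
  · exact n.cast_nonneg.trans (natCast_le_sphereEigenvalue hk)

lemma jacobiShift_pos (hn : 2 ≤ n) : 0 < jacobiShift n := by
  have : (2 : ℝ) ≤ n := by exact_mod_cast hn
  unfold jacobiShift
  apply div_pos <;> nlinarith

lemma two_mul_jacobiShift_lt (hn : 1 ≤ n) : 2 * jacobiShift n < n := by
  have : (1 : ℝ) ≤ n := by exact_mod_cast hn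
  unfold jacobiShift
  rw [mul_div_assoc', div_lt_iff₀ (by linarith)]
  nlinarith

lemma two_mul_jacobiShift_lt_sphereEigenvalue (hn : 1 ≤ n) {k : ℕ} (hk : 1 ≤ k) :
    2 * jacobiShift n < sphereEigenvalue n k :=
  (two_mul_jacobiShift_lt hn).trans_le (natCast_le_sphereEigenvalue hk)

lemma jacobiEigenvalue_zero_zero_neg (hn : 2 ≤ n) (hl : 0 < l) : jacobiEigenvalue n 0 0 l < 0 := by
  have hc := jacobiShift_pos hn
  have : 0 < 1 / l * jacobiShift n := by positivity
  simp only [jacobiEigenvalue, sphereEigenvalue_zero]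
  linarith

lemma jacobiEigenvalue_pos (hn : 1 ≤ n) (hj : 1 ≤ j) (hl0 : 0 < l) (hl1 : l ≤ 1) :
    0 < jacobiEigenvalue n i j l := by
  have hgap := two_mul_jacobiShift_lt_sphereEigenvalue hn hj
  have hc : 0 ≤ jacobiShift n := by
    unfold jacobiShift
    have : (1 : ℝ) ≤ n := by exact_mod_cast hn
    apply div_nonneg <;> nlinarith
  have hscale : sphereEigenvalue n j - jacobiShift n ≤
      1 / l * (sphereEigenvalue n j - jacobiShift n) :=
    le_mul_of_one_le_left (by linarith) (one_le_one_div hl0 hl1)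
  have := sphereEigenvalue_nonneg n i
  unfold jacobiEigenvalue
  linarith

lemma criticalScale_eq_jacobiShift_div (hn : 2 ≤ n) :
    criticalScale n i = jacobiShift n / (sphereEigenvalue n i - jacobiShift n) := by
  have : (2 : ℝ) ≤ n := by exact_mod_cast hn
  unfold criticalScale jacobiShift sphereEigenvalue
  rw [← div_div_div_cancel_right₀ (c := 2 * (n : ℝ) - 1) (by linarith), sub_div,
    mul_div_cancel_right₀ _ (by linarith)]

lemma criticalScale_mem_Ioc (hn : 2 ≤ n) (hi : 1 ≤ i) : criticalScale n i ∈ Set.Ioc 0 1 := by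
  have hc := jacobiShift_pos hn
  have hlt := two_mul_jacobiShift_lt_sphereEigenvalue (one_le_two.trans hn) hi
  rw [criticalScale_eq_jacobiShift_div hn]
  exact ⟨div_pos hc (by linarith), (div_le_one (by linarith)).2 (by linarith)⟩

lemma jacobiEigenvalue_eq_zero_iff (hn : 2 ≤ n) (hi : 1 ≤ i) (hl : 0 < l) :
    jacobiEigenvalue n i 0 l = 0 ↔ l = criticalScale n i := by
  have hc := jacobiShift_pos hn
  have hD : 0 < sphereEigenvalue n i - jacobiShift n := by
    linarith [two_mul_jacobiShift_lt_sphereEigenvalue (one_le_two.trans hn) hi]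
  rw [criticalScale_eq_jacobiShift_div hn, eq_div_iff hD.ne']
  simp only [jacobiEigenvalue, sphereEigenvalue_zero]
  constructor
  · intro h
    field_simp at h
    linarith
  · intro h
    field_simp
    linarith

lemma exists_jacobiEigenvalue_eq_zero_iff (hn : 2 ≤ n) :
    (∃ l : ℝ, 0 < l ∧ l ≤ 1 ∧ jacobiEigenvalue n i j l = 0) ↔ j = 0 ∧ 1 ≤ i := by
  constructor
  · rintro ⟨l, hl0, hl1, hzero⟩
    rcases Nat.eq_zero_or_pos j with rfl | hj
    · rcases Nat.eq_zero_or_pos i with rfl | hi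
      · exact absurd hzero (jacobiEigenvalue_zero_zero_neg hn hl0).ne
      · exact ⟨rfl, hi⟩
    · exact absurd hzero (jacobiEigenvalue_pos (by omega) hj hl0 hl1).ne'
  · rintro ⟨rfl, hi⟩
    obtain ⟨hpos, hle⟩ := criticalScale_mem_Ioc hn hi
    exact ⟨_, hpos, hle, (jacobiEigenvalue_eq_zero_iff hn hi hpos).2 rfl⟩

end JacobiHilbertEinstein

open JacobiHilbertEinstein in
theorem stmt_13
    (n : ℕ) (hn : 2 ≤ n)
    (σ : ℕ → ℕ → ℝ → ℝ)
    (hσ : ∀ (i j : ℕ) (l : ℝ), 0 < l →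
      σ i j l = (1 / l) * ((j : ℝ) * ((j : ℝ) + (n : ℝ) - 1) -
        (n : ℝ) * ((n : ℝ) - 1) / (2 * (n : ℝ) - 1)) +
        (i : ℝ) * ((i : ℝ) + (n : ℝ) - 1) - (n : ℝ) * ((n : ℝ) - 1) / (2 * (n : ℝ) - 1)) :
    ∀ i j : ℕ, 0 < i + j →
      ((∃ l : ℝ, 0 < l ∧ l ≤ 1 ∧ σ i j l = 0) ↔ (j = 0 ∧ 1 ≤ i)) ∧
      (j = 0 → 1 ≤ i → ∀ l : ℝ, 0 < l → l ≤ 1 →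
        (σ i j l = 0 ↔
          l = (n : ℝ) * ((n : ℝ) - 1) /
            ((i : ℝ) * ((i : ℝ) + (n : ℝ) - 1) * (2 * (n : ℝ) - 1) -
              (n : ℝ) * ((n : ℝ) - 1)))) := by
  intro i j _
  have hσ' : ∀ l, 0 < l → σ i j l = jacobiEigenvalue n i j l := hσ i j
  refine ⟨?_, ?_⟩
  · rw [← exists_jacobiEigenvalue_eq_zero_iff hn]
    refine exists_congr fun l => and_congr_right fun hl => ?_
    rw [hσ' l hl]
  · rintro rfl hi l hl _
    rw [hσ' l hl]
    exact jacobiEigenvalue_eq_zero_iff hn hi hl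
end

section
/- For every integer n ≥ 2, all integers i,j ≥ 0 with i + j > 0, and every λ in the open interval ((n−1)/n, n/(n−1)), one has σ_{i,j}(λ) ≠ 0; i.e., the family of product metrics g_λ on Sⁿ × Sⁿ has no degeneracy instants in the interval ((n−1)/n, n/(n−1)). -/
/-!
Write `ρₖ = k(k+n-1)` and `c = n(n-1)/(2n-1)`, so that `σ_{i,j}(λ) = (ρⱼ - c)/λ + (ρᵢ - c)`.
Since `ρ₀ = 0` and `ρₖ ≥ n` for `k ≥ 1`, and `(1 + t) c < n` exactly when `t (n-1) < n`,
the eigenvalue `σ_{i,j}(λ)` is positive: for `i, j ≥ 1` both terms are positive, for `i = 0` it is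
`(ρⱼ - (1 + λ) c)/λ`, and for `j = 0` it is `ρᵢ - (1 + 1/λ) c`. The interval
`((n-1)/n, n/(n-1))` is exactly where both `λ` and `1/λ` satisfy `t (n-1) < n`.
-/

namespace ProductSphere

variable {N t l : ℝ} {i j k : ℕ}

def sphereEigenvalue (N : ℝ) (k : ℕ) : ℝ := k * (k + N - 1)

noncomputable def jacobiShift (N : ℝ) : ℝ := N * (N - 1) / (2 * N - 1)

noncomputable def jacobiEigenvalue (N : ℝ) (i j : ℕ) (l : ℝ) : ℝ :=
  (1 / l) * (sphereEigenvalue N j - jacobiShift N) + (sphereEigenvalue N i - jacobiShift N)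

@[simp]
theorem sphereEigenvalue_zero (N : ℝ) : sphereEigenvalue N 0 = 0 := by
  simp [sphereEigenvalue]

theorem le_sphereEigenvalue (hN : 0 ≤ N) (hk : 0 < k) : N ≤ sphereEigenvalue N k := by
  have hk' : (1 : ℝ) ≤ k := by exact_mod_cast hk
  unfold sphereEigenvalue
  nlinarith

theorem one_add_mul_jacobiShift_lt (hN : 1 < N) (hk : 0 < k) (ht : t * (N - 1) < N) :
    (1 + t) * jacobiShift N < sphereEigenvalue N k := by
  have h2N : 0 < 2 * N - 1 := by linarith
  have hshift : (1 + t) * jacobiShift N < N := by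
    rw [jacobiShift, mul_div_assoc', div_lt_iff₀ h2N]
    nlinarith
  exact hshift.trans_le (le_sphereEigenvalue (by linarith) hk)

theorem jacobiShift_lt_sphereEigenvalue (hN : 1 < N) (hk : 0 < k) :
    jacobiShift N < sphereEigenvalue N k := by
  simpa using one_add_mul_jacobiShift_lt (t := 0) hN hk (by linarith)

theorem pos_of_sub_one_div_lt (hN : 1 ≤ N) (hl : (N - 1) / N < l) : 0 < l :=
  (div_nonneg (by linarith) (by linarith)).trans_lt hl

theorem jacobiEigenvalue_pos (hN : 1 < N) (hij : 0 < i + j)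
    (hl₁ : (N - 1) / N < l) (hl₂ : l < N / (N - 1)) : 0 < jacobiEigenvalue N i j l := by
  have hl := pos_of_sub_one_div_lt hN.le hl₁
  have hl_mul : l * (N - 1) < N := (lt_div_iff₀ (by linarith)).1 hl₂
  have hinv_mul : 1 / l * (N - 1) < N := by
    rw [one_div_mul_eq_div, div_lt_iff₀ hl]
    rw [div_lt_iff₀ (by linarith)] at hl₁
    linarith
  unfold jacobiEigenvalue
  rcases Nat.eq_zero_or_pos i with rfl | hi
  · have hj : 0 < j := by omega
    have hgap := one_add_mul_jacobiShift_lt hN hj hl_mul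
    have hrewrite : 1 / l * (sphereEigenvalue N j - jacobiShift N) - jacobiShift N
        = 1 / l * (sphereEigenvalue N j - (1 + l) * jacobiShift N) := by
      field_simp
      ring
    simp only [sphereEigenvalue_zero, zero_sub, ← sub_eq_add_neg, hrewrite]
    exact mul_pos (by positivity) (by linarith)
  rcases Nat.eq_zero_or_pos j with rfl | hj
  · have hgap := one_add_mul_jacobiShift_lt hN hi hinv_mul
    simp only [sphereEigenvalue_zero]
    linarith
  · have hJ := jacobiShift_lt_sphereEigenvalue hN hj
    have hI := jacobiShift_lt_sphereEigenvalue hN hi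
    have : 0 < 1 / l * (sphereEigenvalue N j - jacobiShift N) :=
      mul_pos (by positivity) (by linarith)
    linarith

end ProductSphere

open ProductSphere in
theorem stmt_15
    (n : ℕ) (hn : 2 ≤ n)
    (σ : ℕ → ℕ → ℝ → ℝ)
    (hσ : ∀ (i j : ℕ) (l : ℝ), 0 < l →
      σ i j l = (1 / l) * ((j : ℝ) * ((j : ℝ) + (n : ℝ) - 1) -
        (n : ℝ) * ((n : ℝ) - 1) / (2 * (n : ℝ) - 1)) +
        (i : ℝ) * ((i : ℝ) + (n : ℝ) - 1) - (n : ℝ) * ((n : ℝ) - 1) / (2 * (n : ℝ) - 1)) :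
    ∀ i j : ℕ, 0 < i + j → ∀ l : ℝ,
      ((n : ℝ) - 1) / (n : ℝ) < l → l < (n : ℝ) / ((n : ℝ) - 1) → σ i j l ≠ 0 := by
  intro i j hij l hl₁ hl₂
  have hN : (1 : ℝ) < n := by exact_mod_cast hn
  have hσ_eq : σ i j l = jacobiEigenvalue n i j l := by
    rw [hσ i j l (pos_of_sub_one_div_lt hN.le hl₁)]
    simp only [jacobiEigenvalue, sphereEigenvalue, jacobiShift]
    ring
  rw [hσ_eq]
  exact (jacobiEigenvalue_pos hN hij hl₁ hl₂).ne'
end
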